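/- arXiv:2602.21844 — 10 statements merged into one kernel-verified Lean document; each statement's English description precedes it below -/
import Mathlib

section
/- Every minimizer (p*, ε*) of Problem 3 admits a threshold index h ∈ {1, …, N} such that: p*₁ ≥ 1/N; p*ₖ = 1/N for every k with 1 < k < h; p*_h ≤ 1/N; and p*ₖ = 0 for every k with h < k ≤ N. -/
open Finset MeasureTheory Real

/-- Differential-privacy error term: sum over clients with nonzero selection
probability of `pₖ² / εₖ²`. -/
noncomputable def dpError {N : ℕ} (p ε : Fin N → ℝ) : ℝ :=
  ∑ k, if p k ≠ 0 then (p k) ^ 2 / (ε k) ^ 2 else 0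

/-- Objective of Problem 3:
`G(p,ε) = η(‖p−pᵘ‖₁ + √(‖p−pᵘ‖₁² + Q·Σ_{pₖ≠0} pₖ²/εₖ²)) + Σₖ εₖ vₖ`,
where `pᵘ = (1/N,…,1/N)`. -/
noncomputable def objG {N : ℕ} (η Q : ℝ) (v p ε : Fin N → ℝ) : ℝ :=
  η * ((∑ k, |p k - 1 / (N : ℝ)|) +
      Real.sqrt ((∑ k, |p k - 1 / (N : ℝ)|) ^ 2 + Q * dpError p ε)) +
    ∑ k, ε k * v k

/-- Feasible set of Problem 3: `Σₖ pₖ = 1`, `pₖ ≥ 0`, `εₖ ≥ 0`, and `εₖ > 0`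
whenever `pₖ > 0`. -/
def Feasible {N : ℕ} (p ε : Fin N → ℝ) : Prop :=
  (∑ k, p k = 1) ∧ (∀ k, 0 ≤ p k) ∧ (∀ k, 0 ≤ ε k) ∧ (∀ k, 0 < p k → 0 < ε k)

/-- `(p, ε)` is a minimizer of Problem 3 with virtual costs `v`. -/
def IsMinimizer {N : ℕ} (η Q : ℝ) (v p ε : Fin N → ℝ) : Prop :=
  Feasible p ε ∧ ∀ q e : Fin N → ℝ, Feasible q e → objG η Q v p ε ≤ objG η Q v q e

/-! At a minimizer, swapping two clients `j < k` changes only the cost term, by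
`(ε j - ε k) * (v k - v j)`, so `ε` is antitone; together with `ε k = 0` off the support of `p`
this makes the support an initial segment. The first-order condition in `ε k` reads
`v k * ε k ^ 3 = c * p k ^ 2`, which makes the marginal cost `v k * ε k / p k` strictly increasing
along the support. Moving mass `δ` from `b` to `a < b`, with `ε` scaled along with `p`, leaves
`dpError` unchanged and lowers the cost by `δ` times the difference of marginal costs, so it
must strictly increase `‖p - pᵘ‖₁`. This forces `1 / N ≤ p a` and `p b ≤ 1 / N` for all `a < b`
in the support, which is the threshold structure. -/

lemma exists_transfer_abs_le {x y u : ℝ} (hy : 0 < y) (h : x < u ∨ u < y) :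
    ∃ δ, 0 < δ ∧ δ < y ∧ |x + δ - u| + |y - δ - u| ≤ |x - u| + |y - u| := by
  have hx : ∀ δ, 0 ≤ δ → |x + δ - u| ≤ |x - u| + δ := fun δ hδ =>
    abs_le.2 ⟨by linarith [neg_abs_le (x - u)], by linarith [le_abs_self (x - u)]⟩
  have hy' : ∀ δ, 0 ≤ δ → |y - δ - u| ≤ |y - u| + δ := fun δ hδ =>
    abs_le.2 ⟨by linarith [neg_abs_le (y - u)], by linarith [le_abs_self (y - u)]⟩
  rcases h with h | h
  · have hδ : 0 < min (u - x) y := lt_min (sub_pos.2 h) hy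
    refine ⟨min (u - x) y / 2, by positivity, by linarith [min_le_right (u - x) y], ?_⟩
    rw [abs_of_neg (a := x + _ - u) (by linarith [min_le_left (u - x) y]),
      abs_of_neg (a := x - u) (by linarith)]
    linarith [hy' (min (u - x) y / 2) (by positivity)]
  · have hδ : 0 < min (y - u) y := lt_min (sub_pos.2 h) hy
    refine ⟨min (y - u) y / 2, by positivity, by linarith [min_le_right (y - u) y], ?_⟩
    rw [abs_of_pos (a := y - _ - u) (by linarith [min_le_left (y - u) y]),
      abs_of_pos (a := y - u) (by linarith)]
    linarith [hx (min (y - u) y / 2) (by positivity)]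

lemma one_div_card_le_of_sum_eq_one {ι : Type*} [Fintype ι] {p : ι → ℝ}
    (hsum : ∑ k, p k = 1) (i : ι) (h : ∀ k, k ≠ i → p k ≤ 1 / Fintype.card ι) :
    1 / (Fintype.card ι : ℝ) ≤ p i := by
  classical
  have hcard : (Fintype.card ι : ℝ) ≠ 0 := by
    have : Nonempty ι := ⟨i⟩
    positivity
  have hzero : ∑ k, (p k - 1 / Fintype.card ι) = 0 := by
    simp [sum_sub_distrib, hsum, hcard]
  have hrest : ∑ k ∈ univ.erase i, (p k - 1 / Fintype.card ι) ≤ 0 :=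
    sum_nonpos fun k hk => sub_nonpos.2 (h k (ne_of_mem_erase hk))
  rw [← add_sum_erase _ _ (mem_univ i)] at hzero
  linarith

lemma exists_pos_forall_lt_eq_zero {ι : Type*} [Fintype ι] [LinearOrder ι] {p : ι → ℝ}
    (hp : ∀ k, 0 ≤ p k) (h : ∃ k, 0 < p k) : ∃ m, 0 < p m ∧ ∀ k, m < k → p k = 0 := by
  obtain ⟨k, hk⟩ := h
  obtain ⟨m, hm, hmax⟩ := (univ.filter (0 < p ·)).exists_max_image id ⟨k, by simpa⟩
  refine ⟨m, (mem_filter.1 hm).2, fun j hj => ?_⟩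
  by_contra hne
  exact (hmax j (by simpa using (hp j).lt_of_ne' hne)).not_gt hj

lemma sum_update_mul {ι : Type*} [Fintype ι] [DecidableEq ι] (ε v : ι → ℝ) (k : ι) (t : ℝ) :
    ∑ m, Function.update ε k t m * v m = ∑ m, ε m * v m + (t - ε k) * v k := by
  rw [← sub_eq_iff_eq_add', ← sum_sub_distrib, Fintype.sum_eq_single k fun m hm => by
    simp [Function.update_of_ne hm]]
  simp only [Function.update_self]
  ring

lemma HasDerivAt.sqrt_add_div_sq {b c t : ℝ} (ht : t ≠ 0) (h : 0 < b + c / t ^ 2) :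
    HasDerivAt (fun s => √(b + c / s ^ 2)) (-(c / (t ^ 3 * √(b + c / t ^ 2)))) t := by
  have hquot := (hasDerivAt_const t c).fun_div (hasDerivAt_pow 2 t) (pow_ne_zero 2 ht)
  convert (hquot.const_add b).sqrt h.ne' using 1
  field_simp
  ring

lemma IsLocalMin.mul_pow_three_mul_sqrt_eq {a b c d w t₀ : ℝ} (ht₀ : t₀ ≠ 0)
    (hpos : 0 < b + c / t₀ ^ 2)
    (hmin : IsLocalMin (fun t => a * √(b + c / t ^ 2) + w * t + d) t₀) :
    w * t₀ ^ 3 * √(b + c / t₀ ^ 2) = a * c := by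
  have hderiv := (((HasDerivAt.sqrt_add_div_sq ht₀ hpos).const_mul a).add
    ((hasDerivAt_id t₀).const_mul w)).add_const d
  have hzero := hmin.hasDerivAt_eq_zero hderiv
  have hR : 0 < √(b + c / t₀ ^ 2) := Real.sqrt_pos.2 hpos
  generalize √(b + c / t₀ ^ 2) = R at hR hzero ⊢
  field_simp at hzero
  linarith

section ProblemThree

variable {N : ℕ} {η Q : ℝ} {v p ε : Fin N → ℝ}

lemma dpError_pos {k : Fin N} (hp : p k ≠ 0) (hε : ε k ≠ 0) : 0 < dpError p ε := by
  refine lt_of_lt_of_le ?_ (single_le_sum (f := fun j => if p j ≠ 0 then p j ^ 2 / ε j ^ 2 else 0)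
    (fun j _ => by positivity) (mem_univ k))
  simp only [if_pos hp]
  positivity

lemma dpError_comp_perm (σ : Equiv.Perm (Fin N)) : dpError (p ∘ σ) (ε ∘ σ) = dpError p ε :=
  Equiv.sum_comp σ fun k => if p k ≠ 0 then p k ^ 2 / ε k ^ 2 else 0

lemma dpError_update_of_eq_zero {k : Fin N} (hk : p k = 0) (t : ℝ) :
    dpError p (Function.update ε k t) = dpError p ε :=
  sum_congr rfl fun m _ => by
    rcases eq_or_ne m k with rfl | hm
    · simp [hk]
    · rw [Function.update_of_ne hm]

lemma dpError_update {k : Fin N} (hk : p k ≠ 0) (t : ℝ) :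
    dpError p (Function.update ε k t) = dpError p ε + (p k ^ 2 / t ^ 2 - p k ^ 2 / ε k ^ 2) := by
  rw [← sub_eq_iff_eq_add', dpError, dpError, ← sum_sub_distrib,
    Fintype.sum_eq_single k fun m hm => by simp [Function.update_of_ne hm]]
  simp [hk]

lemma dpError_rescale {q : Fin N → ℝ} (hsupp : ∀ k, q k = 0 ↔ p k = 0) :
    dpError q (fun k => ε k + (q k - p k) * ε k / p k) = dpError p ε :=
  sum_congr rfl fun k _ => by
    by_cases hp : p k = 0
    · simp [hp, (hsupp k).2 hp]
    have hq : q k ≠ 0 := fun h => hp ((hsupp k).1 h)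
    have he : ε k + (q k - p k) * ε k / p k = ε k * q k / p k := by
      field_simp
      ring
    dsimp only
    rw [if_pos hq, if_pos hp, he, div_pow, mul_pow, div_div_eq_mul_div, mul_comm (ε k ^ 2),
      ← div_div, mul_div_cancel_left₀ _ (pow_ne_zero 2 hq)]

lemma objG_sub_objG (w : Fin N → ℝ) :
    objG η Q v p ε - objG η Q w p ε = ∑ k, ε k * (v k - w k) := by
  simp only [objG, mul_sub, sum_sub_distrib]
  ring

lemma objG_comp_perm (σ : Equiv.Perm (Fin N)) :
    objG η Q v (p ∘ σ) (ε ∘ σ) = objG η Q (v ∘ σ.symm) p ε := by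
  simp only [objG, dpError_comp_perm, Function.comp_apply]
  rw [Equiv.sum_comp σ fun k => |p k - 1 / (N : ℝ)|,
    ← Equiv.sum_comp σ fun k => ε k * v (σ.symm k)]
  simp

lemma objG_update_of_eq_zero {k : Fin N} (hk : p k = 0) (t : ℝ) :
    objG η Q v p (Function.update ε k t) = objG η Q v p ε + (t - ε k) * v k := by
  rw [objG, objG, dpError_update_of_eq_zero hk, sum_update_mul]
  ring

lemma Feasible.exists_pos (hf : Feasible p ε) : ∃ k, 0 < p k := by
  by_contra! h
  linarith [hf.1, sum_nonpos fun k (_ : k ∈ univ) => h k]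

lemma Feasible.comp_perm (hf : Feasible p ε) (σ : Equiv.Perm (Fin N)) :
    Feasible (p ∘ σ) (ε ∘ σ) :=
  ⟨(Equiv.sum_comp σ p).trans hf.1, fun k => hf.2.1 (σ k), fun k => hf.2.2.1 (σ k),
    fun k => hf.2.2.2 (σ k)⟩

lemma Feasible.update_eps (hf : Feasible p ε) {k : Fin N} {t : ℝ} (ht : 0 ≤ t)
    (hpos : 0 < p k → 0 < t) : Feasible p (Function.update ε k t) := by
  refine ⟨hf.1, hf.2.1, fun m => ?_, fun m hm => ?_⟩ <;> rcases eq_or_ne m k with rfl | hmk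
  · simpa using ht
  · simpa [Function.update_of_ne hmk] using hf.2.2.1 m
  · simpa using hpos hm
  · simpa [Function.update_of_ne hmk] using hf.2.2.2 m hm

end ProblemThree

namespace IsMinimizer

variable {N : ℕ} {η Q : ℝ} {v p ε : Fin N → ℝ}

lemma eps_eq_zero (hmin : IsMinimizer η Q v p ε) {k : Fin N} (hk : p k = 0) (hv : 0 < v k) :
    ε k = 0 := by
  have h := hmin.2 p _ (hmin.1.update_eps le_rfl fun h => (h.ne' hk).elim)
  rw [objG_update_of_eq_zero hk] at h
  nlinarith [hmin.1.2.2.1 k]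

lemma antitone (hmin : IsMinimizer η Q v p ε) (hv : StrictMono v) : Antitone ε := by
  intro j k hjk
  rcases hjk.eq_or_lt with rfl | hlt
  · exact le_rfl
  have h := hmin.2 _ _ (hmin.1.comp_perm (Equiv.swap j k))
  rw [objG_comp_perm, Equiv.symm_swap, ← sub_nonneg, objG_sub_objG,
    Fintype.sum_eq_add j k hlt.ne fun m hm => by
      simp [Equiv.swap_apply_of_ne_of_ne hm.1 hm.2]] at h
  simp only [Function.comp_apply, Equiv.swap_apply_left, Equiv.swap_apply_right] at h
  nlinarith [hv hlt]

lemma pos_of_le (hmin : IsMinimizer η Q v p ε) (hv : StrictMono v) {j k : Fin N} (hjk : j ≤ k)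
    (hvj : 0 < v j) (hk : 0 < p k) : 0 < p j := by
  refine (hmin.1.2.1 j).lt_of_ne' fun hj => ?_
  linarith [hmin.antitone hv hjk, hmin.1.2.2.2 k hk, hmin.eps_eq_zero hj hvj]

lemma exists_mul_eps_pow_three_eq (hmin : IsMinimizer η Q v p ε) (hη : 0 < η) (hQ : 0 < Q) :
    ∃ c > 0, ∀ k, 0 < p k → v k * ε k ^ 3 = c * p k ^ 2 := by
  obtain ⟨hf, hopt⟩ := hmin
  obtain ⟨S, hS⟩ : ∃ S, S = ∑ k, |p k - 1 / (N : ℝ)| := ⟨_, rfl⟩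
  obtain ⟨D, hD⟩ : ∃ D, D = dpError p ε := ⟨_, rfl⟩
  have hDpos : 0 < D := by
    obtain ⟨k, hk⟩ := hf.exists_pos
    exact hD ▸ dpError_pos hk.ne' (hf.2.2.2 k hk).ne'
  have hR : 0 < √(S ^ 2 + Q * D) := Real.sqrt_pos.2 (by positivity)
  refine ⟨η * Q / √(S ^ 2 + Q * D), by positivity, fun k hk => ?_⟩
  have hεk := hf.2.2.2 k hk
  have hobj : ∀ t, objG η Q v p (Function.update ε k t) =
      η * √((S ^ 2 + Q * (D - p k ^ 2 / ε k ^ 2)) + Q * p k ^ 2 / t ^ 2) + v k * t +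
        (η * S + ∑ m, ε m * v m - ε k * v k) := by
    intro t
    rw [objG, dpError_update hk.ne', sum_update_mul, ← hS, ← hD,
      show S ^ 2 + Q * (D + (p k ^ 2 / t ^ 2 - p k ^ 2 / ε k ^ 2)) =
        S ^ 2 + Q * (D - p k ^ 2 / ε k ^ 2) + Q * p k ^ 2 / t ^ 2 by ring]
    ring
  have hlocal : IsLocalMin (fun t => objG η Q v p (Function.update ε k t)) (ε k) :=
    IsMinOn.isLocalMin (isMinOn_iff.2 fun t (ht : 0 < t) => by
      simpa using hopt _ _ (hf.update_eps ht.le fun _ => ht)) (Ioi_mem_nhds hεk)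
  have harg : S ^ 2 + Q * (D - p k ^ 2 / ε k ^ 2) + Q * p k ^ 2 / ε k ^ 2 = S ^ 2 + Q * D := by
    ring
  simp only [hobj] at hlocal
  have hfoc := hlocal.mul_pow_three_mul_sqrt_eq hεk.ne' (harg ▸ by positivity)
  rw [harg] at hfoc
  field_simp
  linarith

lemma marginal_lt (hmin : IsMinimizer η Q v p ε) (hη : 0 < η) (hQ : 0 < Q) (hv : StrictMono v)
    {a b : Fin N} (hvb : 0 ≤ v b) (hab : a < b) (ha : 0 < p a) (hb : 0 < p b) :
    v a * ε a / p a < v b * ε b / p b := by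
  obtain ⟨c, hc, hfoc⟩ := hmin.exists_mul_eps_pow_three_eq hη hQ
  have hεa := hmin.1.2.2.2 a ha
  have hεb := hmin.1.2.2.2 b hb
  have hsq : ∀ k, 0 < p k → 0 < ε k → (v k * ε k / p k) ^ 2 = c * (v k / ε k) := by
    intro k hk hεk
    field_simp
    linear_combination v k * hfoc k hk
  have hratio : v a / ε a < v b / ε b :=
    (div_lt_div_of_pos_right (hv hab) hεa).trans_le
      (div_le_div_of_nonneg_left hvb hεb (hmin.antitone hv hab.le))
  refine lt_of_pow_lt_pow_left₀ 2 (by positivity) ?_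
  rw [hsq a ha hεa, hsq b hb hεb]
  exact mul_lt_mul_of_pos_left hratio hc

lemma sum_sub_mul_marginal_nonneg (hmin : IsMinimizer η Q v p ε) (hη : 0 ≤ η) {q : Fin N → ℝ}
    (hq_sum : ∑ k, q k = 1) (hq : ∀ k, 0 ≤ q k) (hsupp : ∀ k, q k = 0 ↔ p k = 0)
    (hdist : ∑ k, |q k - 1 / (N : ℝ)| ≤ ∑ k, |p k - 1 / (N : ℝ)|) :
    0 ≤ ∑ k, (q k - p k) * (v k * ε k / p k) := by
  obtain ⟨⟨-, hp, hε, hpε⟩, hopt⟩ := hmin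
  -- Scaling `ε` with `q / p` keeps `dpError` fixed; off the support of `p` the junk value
  -- `x / 0 = 0` leaves `ε k` unchanged.
  set e : Fin N → ℝ := fun k => ε k + (q k - p k) * ε k / p k
  have he : ∀ k, p k ≠ 0 → e k = ε k * q k / p k := fun k hk => by
    simp only [e]
    field_simp
    ring
  have hfeas : Feasible q e := by
    refine ⟨hq_sum, hq, fun k => ?_, fun k hk => ?_⟩
    · rcases eq_or_ne (p k) 0 with h | h
      · simpa [e, h] using hε k
      · rw [he k h]
        exact div_nonneg (mul_nonneg (hε k) (hq k)) (hp k)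
    · have h : p k ≠ 0 := fun h => hk.ne' ((hsupp k).2 h)
      have hpk := (hp k).lt_of_ne' h
      have := hpε k hpk
      rw [he k h]
      positivity
  have hD : dpError q e = dpError p ε := dpError_rescale hsupp
  have hcost : ∑ k, e k * v k = ∑ k, ε k * v k + ∑ k, (q k - p k) * (v k * ε k / p k) := by
    rw [← sum_add_distrib]
    exact sum_congr rfl fun k _ => by simp only [e]; ring
  have hobj_le : η * (∑ k, |q k - 1 / (N : ℝ)| + √((∑ k, |q k - 1 / (N : ℝ)|) ^ 2 + Q * dpError p ε))
      ≤ η * (∑ k, |p k - 1 / (N : ℝ)| + √((∑ k, |p k - 1 / (N : ℝ)|) ^ 2 + Q * dpError p ε)) := by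
    gcongr
  have h := hopt q e hfeas
  rw [objG, objG, hD, hcost] at h
  linarith

lemma one_div_le_and_le_one_div (hmin : IsMinimizer η Q v p ε) (hη : 0 < η) (hQ : 0 < Q)
    (hv : StrictMono v) {a b : Fin N} (hvb : 0 ≤ v b) (hab : a < b) (ha : 0 < p a)
    (hb : 0 < p b) : 1 / (N : ℝ) ≤ p a ∧ p b ≤ 1 / (N : ℝ) := by
  by_contra hcon
  rw [not_and_or, not_le, not_le] at hcon
  obtain ⟨δ, hδ, hδb, habs⟩ := exists_transfer_abs_le hb hcon
  have hne := hab.ne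
  set q : Fin N → ℝ := Function.update (Function.update p a (p a + δ)) b (p b - δ)
  have hqa : q a = p a + δ := by simp [q, hne]
  have hqb : q b = p b - δ := by simp [q]
  have hqk : ∀ k, k ≠ a ∧ k ≠ b → q k = p k := fun k hk => by
    simp [q, Function.update_of_ne hk.1, Function.update_of_ne hk.2]
  have hsum_sub : ∀ f : Fin N → ℝ → ℝ, ∑ k, (f k (q k) - f k (p k)) =
      (f a (p a + δ) - f a (p a)) + (f b (p b - δ) - f b (p b)) := fun f => by
    rw [Fintype.sum_eq_add a b hne fun k hk => by rw [hqk k hk, sub_self], hqa, hqb]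
  have hsum : ∑ k, q k = 1 := by
    have := hsum_sub fun _ x => x
    rw [sum_sub_distrib, hmin.1.1] at this
    linarith
  have hq : ∀ k, 0 ≤ q k := fun k => by
    by_cases hk : k ≠ a ∧ k ≠ b
    · rw [hqk k hk]; exact hmin.1.2.1 k
    · rcases not_and_or.1 hk with h | h <;> rw [not_not.1 h] <;> simp [hqa, hqb] <;> linarith
  have hsupp : ∀ k, q k = 0 ↔ p k = 0 := fun k => by
    by_cases hk : k ≠ a ∧ k ≠ b
    · rw [hqk k hk]
    · rcases not_and_or.1 hk with h | h <;> rw [not_not.1 h] <;> simp [hqa, hqb] <;>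
        constructor <;> intro <;> linarith
  have hdist : ∑ k, |q k - 1 / (N : ℝ)| ≤ ∑ k, |p k - 1 / (N : ℝ)| := by
    have := hsum_sub fun _ x => |x - 1 / (N : ℝ)|
    rw [sum_sub_distrib] at this
    linarith
  have key := hmin.sum_sub_mul_marginal_nonneg hη.le hsum hq hsupp hdist
  rw [Fintype.sum_eq_add a b hne fun k hk => by rw [hqk k hk, sub_self, zero_mul], hqa, hqb] at key
  nlinarith [hmin.marginal_lt hη hQ hv hvb hab ha hb]

end IsMinimizer

/-- Every minimizer of Problem 3 (with strictly increasing positive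
virtual costs) has a threshold structure: the first client gets probability
`≥ 1/N`, clients strictly between the first and the threshold `h` get exactly
`1/N`, client `h` gets `≤ 1/N`, and all clients after `h` get `0`. -/
theorem optimal_selection_threshold_structure
    {N : ℕ} (hN : 2 ≤ N) (v : Fin N → ℝ)
    (hv_pos : 0 < v ⟨0, by omega⟩) (hv_mono : StrictMono v)
    (η Q : ℝ) (hη : 0 < η) (hQ : 0 < Q)
    (p ε : Fin N → ℝ) (hmin : IsMinimizer η Q v p ε) :
    ∃ h : Fin N,
      1 / (N : ℝ) ≤ p ⟨0, by omega⟩ ∧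
      (∀ k : Fin N, (⟨0, by omega⟩ : Fin N) < k → k < h → p k = 1 / (N : ℝ)) ∧
      p h ≤ 1 / (N : ℝ) ∧
      (∀ k : Fin N, h < k → p k = 0) := by
  have hv : ∀ k, 0 < v k := fun k => hv_pos.trans_le (hv_mono.monotone (Nat.zero_le _))
  have hle : ∀ k, (⟨0, by omega⟩ : Fin N) < k → p k ≤ 1 / (N : ℝ) := by
    intro k hk
    rcases (hmin.1.2.1 k).eq_or_lt with h | h
    · rw [← h]
      positivity
    · exact (hmin.one_div_le_and_le_one_div hη hQ hv_mono (hv k).le hk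
        (hmin.pos_of_le hv_mono hk.le (hv _) h) h).2
  obtain ⟨h, hph, hlast⟩ := exists_pos_forall_lt_eq_zero hmin.1.2.1 hmin.1.exists_pos
  refine ⟨max h ⟨1, by omega⟩, ?_, fun k hk0 hkt => ?_,
    hle _ (lt_max_of_lt_right (Fin.mk_lt_mk.2 one_pos)),
    fun k hk => hlast k ((le_max_left _ _).trans_lt hk)⟩
  · simpa using one_div_card_le_of_sum_eq_one hmin.1.1 _ fun k hk => by
      simpa using hle k ((show (⟨0, by omega⟩ : Fin N) ≤ k from Nat.zero_le _).lt_of_ne' hk)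
  · have hkh : k < h := (lt_max_iff.1 hkt).resolve_right fun hk1 => by
      simp [Fin.lt_def] at hk0 hk1; omega
    exact le_antisymm (hle k hk0) (hmin.one_div_le_and_le_one_div hη hQ hv_mono (hv h).le hkh
      (hmin.pos_of_le hv_mono hkh.le (hv k) hph) hph).1
end

section
/- Define ε*ₖ = pₖ^{2/3}·B / ((Σᵢ vᵢ^{2/3}·pᵢ^{2/3})·vₖ^{1/3}) for each k ∈ {1, …, N}. Then ε* is feasible, i.e., Σₖ vₖ·ε*ₖ = B, ε*ₖ ≥ 0 for all k, and ε*ₖ > 0 whenever pₖ > 0; and ε* minimizes the differential-privacy error term: for every ε ∈ ℝ^N with εₖ ≥ 0 for all k, εₖ > 0 whenever pₖ > 0, and Σₖ vₖ·εₖ = B, one has Σ_{k : pₖ ≠ 0} pₖ²/εₖ² ≥ Σ_{k : pₖ ≠ 0} pₖ²/(ε*ₖ)². -/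
/-!
The error `∑ pₖ² / εₖ²` is a sum of convex functions of the `εₖ`, so it lies above its tangent
plane at `ε*`. The budgets `ε*` are chosen so that `pₖ² / ε*ₖ³ = (S / B)³ vₖ` with
`S = ∑ᵢ vᵢ^{2/3} pᵢ^{2/3}`: the gradient at `ε*` is proportional to the constraint vector `v`
(Lagrange's condition), so the tangent plane is constant on the budget hyperplane `∑ vₖ εₖ = B`.
-/

open Finset Real

theorem Finset.sum_le_sum_of_tangent_le {ι : Type*} (s : Finset ι) (φ : ι → ℝ → ℝ)
    (w x y : ι → ℝ) (c : ℝ)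
    (htangent : ∀ k ∈ s, φ k (x k) + c * (w k * x k - w k * y k) ≤ φ k (y k))
    (hxy : ∑ k ∈ s, w k * x k = ∑ k ∈ s, w k * y k) :
    ∑ k ∈ s, φ k (x k) ≤ ∑ k ∈ s, φ k (y k) :=
  calc ∑ k ∈ s, φ k (x k)
      = ∑ k ∈ s, (φ k (x k) + c * (w k * x k - w k * y k)) := by
        rw [sum_add_distrib, ← mul_sum, sum_sub_distrib, hxy, sub_self, mul_zero, add_zero]
    _ ≤ ∑ k ∈ s, φ k (y k) := sum_le_sum htangent

theorem sq_div_sq_tangent_le (p : ℝ) {a x : ℝ} (ha : 0 < a) (hx : 0 < x) :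
    p ^ 2 / a ^ 2 + 2 * (p ^ 2 / a ^ 3) * (a - x) ≤ p ^ 2 / x ^ 2 := by
  have hgap : p ^ 2 / x ^ 2 - (p ^ 2 / a ^ 2 + 2 * (p ^ 2 / a ^ 3) * (a - x))
      = p ^ 2 * (x - a) ^ 2 * (2 * x + a) / (x ^ 2 * a ^ 3) := by
    field_simp
    ring
  have : 0 ≤ p ^ 2 * (x - a) ^ 2 * (2 * x + a) / (x ^ 2 * a ^ 3) := by positivity
  linarith

theorem Real.rpow_two_div_three_mul_rpow_one_div_three {x : ℝ} (hx : 0 ≤ x) :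
    x ^ ((2 : ℝ) / 3) * x ^ ((1 : ℝ) / 3) = x := by
  rw [← rpow_add' hx (by norm_num)]
  norm_num

theorem Real.rpow_div_three_pow_three {x : ℝ} (hx : 0 ≤ x) (a : ℝ) :
    (x ^ (a / 3)) ^ 3 = x ^ a := by
  rw [← rpow_natCast, ← rpow_mul hx]
  norm_num

section OptimalBudget

variable {ι : Type*} [Fintype ι] (v p : ι → ℝ) (B : ℝ)

noncomputable def budgetNormalizer : ℝ :=
  ∑ i, v i ^ ((2 : ℝ) / 3) * p i ^ ((2 : ℝ) / 3)

noncomputable def optimalBudget (k : ι) : ℝ :=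
  p k ^ ((2 : ℝ) / 3) * B / (budgetNormalizer v p * v k ^ ((1 : ℝ) / 3))

variable {v p B}

theorem budgetNormalizer_pos (hv : ∀ k, 0 < v k) (hp : ∀ k, 0 ≤ p k) (hp0 : ∃ k, p k ≠ 0) :
    0 < budgetNormalizer v p := by
  obtain ⟨k₀, hk₀⟩ := hp0
  have hpk₀ : 0 < p k₀ := (hp k₀).lt_of_ne' hk₀
  refine sum_pos' (fun i _ => ?_) ⟨k₀, mem_univ _, ?_⟩
  · have := hp i
    have := (hv i).le
    positivity
  · have := hv k₀
    positivity

theorem optimalBudget_nonneg (hv : ∀ k, 0 < v k) (hp : ∀ k, 0 ≤ p k) (hB : 0 ≤ B) (k : ι) :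
    0 ≤ optimalBudget v p B k := by
  have := hp k
  have := (hv k).le
  have : 0 ≤ budgetNormalizer v p := sum_nonneg fun i _ => by
    have := hp i
    have := (hv i).le
    positivity
  unfold optimalBudget
  positivity

theorem optimalBudget_pos (hv : ∀ k, 0 < v k) (hp : ∀ k, 0 ≤ p k) (hB : 0 < B) {k : ι}
    (hk : 0 < p k) : 0 < optimalBudget v p B k := by
  have := hv k
  have := budgetNormalizer_pos hv hp ⟨k, hk.ne'⟩
  unfold optimalBudget
  positivity

theorem optimalBudget_of_eq_zero {k : ι} (hk : p k = 0) : optimalBudget v p B k = 0 := by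
  rw [optimalBudget, hk, zero_rpow (by norm_num), zero_mul, zero_div]

theorem sum_mul_optimalBudget (hv : ∀ k, 0 < v k) (hp : ∀ k, 0 ≤ p k) (hp0 : ∃ k, p k ≠ 0) :
    ∑ k, v k * optimalBudget v p B k = B := by
  have hS := (budgetNormalizer_pos hv hp hp0).ne'
  have hterm : ∀ k, v k * optimalBudget v p B k
      = v k ^ ((2 : ℝ) / 3) * p k ^ ((2 : ℝ) / 3) * B / budgetNormalizer v p := by
    intro k
    have := (rpow_pos_of_pos (hv k) ((1 : ℝ) / 3)).ne'
    rw [optimalBudget]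
    nth_rewrite 1 [← rpow_two_div_three_mul_rpow_one_div_three (hv k).le]
    field_simp
  simp_rw [hterm, ← sum_div, ← sum_mul]
  rw [← budgetNormalizer, mul_div_cancel_left₀ B hS]

theorem sq_div_optimalBudget_pow_three (hv : ∀ k, 0 < v k) (hp : ∀ k, 0 ≤ p k) (hB : 0 < B)
    {k : ι} (hk : 0 < p k) :
    p k ^ 2 / optimalBudget v p B k ^ 3 = (budgetNormalizer v p / B) ^ 3 * v k := by
  have := hv k
  have := (budgetNormalizer_pos hv hp ⟨k, hk.ne'⟩).ne'
  have := hB.ne'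
  have := hk.ne'
  rw [optimalBudget, div_pow, mul_pow, mul_pow, rpow_div_three_pow_three (hp k),
    rpow_div_three_pow_three (hv k).le, rpow_two, rpow_one]
  field_simp

end OptimalBudget

theorem dpError_optimalBudget_le {N : ℕ} {v p : Fin N → ℝ} {B : ℝ} (hv : ∀ k, 0 < v k)
    (hp : ∀ k, 0 ≤ p k) (hp0 : ∃ k, p k ≠ 0) (hB : 0 < B) {ε : Fin N → ℝ}
    (hε : ∀ k, 0 ≤ ε k) (hεpos : ∀ k, 0 < p k → 0 < ε k) (hεB : ∑ k, v k * ε k = B) :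
    dpError p (optimalBudget v p B) ≤ dpError p ε := by
  set c := 2 * (budgetNormalizer v p / B) ^ 3
  have hc : 0 ≤ c := by have := budgetNormalizer_pos hv hp hp0; positivity
  refine sum_le_sum_of_tangent_le univ (fun k e => if p k ≠ 0 then p k ^ 2 / e ^ 2 else 0)
    v _ ε c (fun k _ => ?_) (by rw [sum_mul_optimalBudget hv hp hp0, hεB])
  by_cases hk : p k = 0
  · have := mul_nonneg (hv k).le (hε k)
    simp only [hk, ne_eq, not_true_eq_false, if_false, optimalBudget_of_eq_zero hk]
    linarith [mul_nonneg hc this]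
  · have hk' : 0 < p k := (hp k).lt_of_ne' hk
    have hslope : c * (v k * optimalBudget v p B k - v k * ε k)
        = 2 * (p k ^ 2 / optimalBudget v p B k ^ 3) * (optimalBudget v p B k - ε k) := by
      rw [sq_div_optimalBudget_pow_three hv hp hB hk']
      ring
    simp only [hk, ne_eq, not_false_eq_true, if_true, hslope]
    exact sq_div_sq_tangent_le _ (optimalBudget_pos hv hp hB hk') (hεpos k hk')

theorem optimal_privacy_budgets_general
    {N : ℕ} (v p : Fin N → ℝ) (B : ℝ)
    (hv : ∀ k, 0 < v k) (hp : ∀ k, 0 ≤ p k) (hp0 : ∃ k, p k ≠ 0) (hB : 0 < B)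
    (εstar : Fin N → ℝ)
    (hεstar : ∀ k, εstar k =
      (p k) ^ ((2 : ℝ) / 3) * B /
        ((∑ i, (v i) ^ ((2 : ℝ) / 3) * (p i) ^ ((2 : ℝ) / 3)) * (v k) ^ ((1 : ℝ) / 3))) :
    (∑ k, v k * εstar k = B) ∧ (∀ k, 0 ≤ εstar k) ∧ (∀ k, 0 < p k → 0 < εstar k) ∧
    (∀ ε : Fin N → ℝ, (∀ k, 0 ≤ ε k) → (∀ k, 0 < p k → 0 < ε k) →
      (∑ k, v k * ε k = B) → dpError p εstar ≤ dpError p ε) := by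
  obtain rfl : εstar = optimalBudget v p B := funext hεstar
  exact ⟨sum_mul_optimalBudget hv hp hp0, optimalBudget_nonneg hv hp hB.le,
    fun k => optimalBudget_pos hv hp hB,
    fun ε hε hεpos hεB => dpError_optimalBudget_le hv hp hp0 hB hε hεpos hεB⟩

/-- The privacy budgets
`ε*ₖ = pₖ^{2/3}·B / ((Σᵢ vᵢ^{2/3} pᵢ^{2/3})·vₖ^{1/3})` are feasible (they exhaust
the budget `B`, are nonnegative, and positive on selected clients) and minimize
the differential-privacy error among all feasible budget vectors. -/
theorem optimal_privacy_budgets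
    {N : ℕ} (hN : 1 ≤ N) (v p : Fin N → ℝ) (B : ℝ)
    (hv : ∀ k, 0 < v k) (hp : ∀ k, 0 ≤ p k) (hp0 : ∃ k, p k ≠ 0) (hB : 0 < B)
    (εstar : Fin N → ℝ)
    (hεstar : ∀ k, εstar k =
      (p k) ^ ((2 : ℝ) / 3) * B /
        ((∑ i, (v i) ^ ((2 : ℝ) / 3) * (p i) ^ ((2 : ℝ) / 3)) * (v k) ^ ((1 : ℝ) / 3))) :
    (∑ k, v k * εstar k = B) ∧ (∀ k, 0 ≤ εstar k) ∧ (∀ k, 0 < p k → 0 < εstar k) ∧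
    (∀ ε : Fin N → ℝ, (∀ k, 0 ≤ ε k) → (∀ k, 0 < p k → 0 < ε k) →
      (∑ k, v k * ε k = B) → dpError p εstar ≤ dpError p ε) :=
  optimal_privacy_budgets_general v p B hv hp hp0 hB εstar hεstar
end

section
/- The minimum of the differential-privacy error term Σ_{k : pₖ ≠ 0} pₖ²/εₖ², taken over all ε ∈ ℝ^N with εₖ ≥ 0 for all k, εₖ > 0 whenever pₖ > 0, and Σₖ vₖ·εₖ = B, is attained and equals (Σₖ (pₖ·vₖ)^{2/3})³ / B². -/
open Finset Real

/-! Substituting `aₖ = (pₖ vₖ)^{2/3}` and `xₖ = vₖ εₖ` turns the error into `Σ aₖ³ / xₖ²` under the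
linear constraint `Σ xₖ = B`. The tangent-line bound `a³ / x² ≥ 3a / λ² - 2x / λ³` summed with
`λ = B / Σ aₖ` gives `(Σ aₖ)³ / B²`, and equality holds for `xₖ = λ aₖ`. -/

lemma tangent_line_le_pow_three_div_sq {a x l : ℝ} (ha : 0 ≤ a) (hx : 0 ≤ x) (hax : 0 < a → 0 < x)
    (hl : 0 < l) : 3 * a / l ^ 2 - 2 * x / l ^ 3 ≤ a ^ 3 / x ^ 2 := by
  rcases ha.eq_or_lt with rfl | ha
  · norm_num
    positivity
  have hx := hax ha
  rw [div_sub_div _ _ (by positivity) (by positivity), div_le_div_iff₀ (by positivity)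
    (by positivity)]
  -- `(a l)³ - 3 (a l) x² + 2 x³ = (a l - x)² (a l + 2 x)`
  nlinarith [mul_nonneg (sq_nonneg (a * l - x)) (by positivity : (0 : ℝ) ≤ a * l + 2 * x),
    pow_pos hl 2, pow_pos hx 2]

lemma sum_pow_three_div_sq_le {ι : Type*} (s : Finset ι) {a x : ι → ℝ} (ha : ∀ i, 0 ≤ a i)
    (hx : ∀ i, 0 ≤ x i) (hax : ∀ i, 0 < a i → 0 < x i) :
    (∑ i ∈ s, a i) ^ 3 / (∑ i ∈ s, x i) ^ 2 ≤ ∑ i ∈ s, a i ^ 3 / x i ^ 2 := by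
  have hA : 0 ≤ ∑ i ∈ s, a i := sum_nonneg fun i _ => ha i
  have hX : 0 ≤ ∑ i ∈ s, x i := sum_nonneg fun i _ => hx i
  rcases hA.eq_or_lt with hA | hA
  · rw [← hA]
    simpa using sum_nonneg fun i _ => by have := ha i; positivity
  rcases hX.eq_or_lt with hX | hX
  · rw [← hX]
    simpa using sum_nonneg fun i _ => by have := ha i; positivity
  set l := (∑ i ∈ s, x i) / ∑ i ∈ s, a i
  have hl : 0 < l := div_pos hX hA
  calc (∑ i ∈ s, a i) ^ 3 / (∑ i ∈ s, x i) ^ 2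
      = 3 * (∑ i ∈ s, a i) / l ^ 2 - 2 * (∑ i ∈ s, x i) / l ^ 3 := by
        simp only [l]
        field_simp
        ring
    _ = ∑ i ∈ s, (3 * a i / l ^ 2 - 2 * x i / l ^ 3) := by
        rw [sum_sub_distrib, ← sum_div, ← sum_div, ← mul_sum, ← mul_sum]
    _ ≤ ∑ i ∈ s, a i ^ 3 / x i ^ 2 :=
        sum_le_sum fun i _ => tangent_line_le_pow_three_div_sq (ha i) (hx i) (hax i) hl

lemma pow_three_div_mul_self_sq {K : Type*} [Field K] (a c : K) :
    a ^ 3 / (c * a) ^ 2 = a / c ^ 2 := by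
  rcases eq_or_ne a 0 with rfl | ha
  · simp
  rcases eq_or_ne c 0 with rfl | hc
  · simp
  field_simp

lemma sum_pow_three_div_sq_mul_self {ι K : Type*} [Field K] (s : Finset ι) (a : ι → K) (c : K) :
    ∑ i ∈ s, a i ^ 3 / (c * a i) ^ 2 = (∑ i ∈ s, a i) ^ 3 / (c * ∑ i ∈ s, a i) ^ 2 := by
  simp only [pow_three_div_mul_self_sq, ← sum_div]

lemma rpow_two_div_three_pow_three {w : ℝ} (hw : 0 ≤ w) : (w ^ ((2 : ℝ) / 3)) ^ 3 = w ^ 2 := by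
  rw [← rpow_mul_natCast hw]
  norm_num

lemma dpError_eq_sum_pow_three_div_sq {N : ℕ} {v p : Fin N → ℝ} (hv : ∀ k, 0 < v k)
    (hp : ∀ k, 0 ≤ p k) (ε : Fin N → ℝ) :
    dpError p ε = ∑ k, ((p k * v k) ^ ((2 : ℝ) / 3)) ^ 3 / (v k * ε k) ^ 2 := by
  refine sum_congr rfl fun k _ => ?_
  rw [rpow_two_div_three_pow_three (mul_nonneg (hp k) (hv k).le)]
  split_ifs with hpk
  · rw [mul_pow, mul_pow, mul_comm (v k ^ 2), mul_div_mul_right _ _ (pow_ne_zero 2 (hv k).ne')]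
  · simp [not_not.mp hpk]

theorem dpError_min_value_general
    {N : ℕ} (v p : Fin N → ℝ) (B : ℝ)
    (hv : ∀ k, 0 < v k) (hp : ∀ k, 0 ≤ p k) (hp0 : ∃ k, p k ≠ 0) (hB : 0 < B) :
    IsLeast
      {x : ℝ | ∃ ε : Fin N → ℝ, (∀ k, 0 ≤ ε k) ∧ (∀ k, 0 < p k → 0 < ε k) ∧
        (∑ k, v k * ε k = B) ∧ x = dpError p ε}
      ((∑ k, (p k * v k) ^ ((2 : ℝ) / 3)) ^ 3 / B ^ 2) := by
  set a : Fin N → ℝ := fun k => (p k * v k) ^ ((2 : ℝ) / 3)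
  have ha k : 0 ≤ a k := rpow_nonneg (mul_nonneg (hp k) (hv k).le) _
  have ha_pos k (hpk : 0 < p k) : 0 < a k := rpow_pos_of_pos (mul_pos hpk (hv k)) _
  have hS : 0 < ∑ k, a k := by
    obtain ⟨k, hk⟩ := hp0
    exact sum_pos' (fun k _ => ha k) ⟨k, mem_univ k, ha_pos k ((hp k).lt_of_ne' hk)⟩
  have hvε (k : Fin N) : v k * (B / (∑ j, a j) * a k / v k) = B / (∑ j, a j) * a k := by
    field_simp [(hv k).ne']
  refine ⟨⟨fun k => B / (∑ j, a j) * a k / v k, fun k => by have := ha k; have := hv k; positivity,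
    fun k hpk => by have := ha_pos k hpk; have := hv k; positivity, ?_, ?_⟩, ?_⟩
  · simp only [hvε, ← mul_sum]
    field_simp
  · rw [dpError_eq_sum_pow_three_div_sq hv hp]
    simp only [hvε]
    exact ((sum_pow_three_div_sq_mul_self univ a (B / ∑ j, a j)).trans
      (by rw [div_mul_cancel₀ _ hS.ne'])).symm
  · rintro _ ⟨ε, hε0, hεpos, hsum, rfl⟩
    rw [dpError_eq_sum_pow_three_div_sq hv hp, ← hsum]
    exact sum_pow_three_div_sq_le univ ha (fun k => mul_nonneg (hv k).le (hε0 k))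
      fun k hak => mul_pos (hv k) (hεpos k ((hp k).lt_of_ne' fun h => by simp [h] at hak))

/-- The minimum of the differential-privacy error over all
feasible privacy-budget vectors (nonnegative, positive on selected clients,
exhausting the monetary budget `B`) is attained and equals
`(Σₖ (pₖ vₖ)^{2/3})³ / B²`. -/
theorem dpError_min_value
    {N : ℕ} (hN : 1 ≤ N) (v p : Fin N → ℝ) (B : ℝ)
    (hv : ∀ k, 0 < v k) (hp : ∀ k, 0 ≤ p k) (hp0 : ∃ k, p k ≠ 0) (hB : 0 < B) :
    IsLeast
      {x : ℝ | ∃ ε : Fin N → ℝ, (∀ k, 0 ≤ ε k) ∧ (∀ k, 0 < p k → 0 < ε k) ∧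
        (∑ k, v k * ε k = B) ∧ x = dpError p ε}
      ((∑ k, (p k * v k) ^ ((2 : ℝ) / 3)) ^ 3 / B ^ 2) :=
  dpError_min_value_general v p B hv hp hp0 hB
end

section
/- The pair (π, ε) satisfies IC and IR if and only if: ε is nonincreasing on [0,∞), ε is integrable on (0,∞), and there exists a constant d ≥ 0 such that π(c) = ∫_c^∞ ε(z) dz + c·ε(c) + d for every c ≥ 0. -/
/-!
Write `u c = π c - c * ε c` for the utility of truthful reporting. Incentive compatibility at
`a ≤ b` in both directions sandwiches `u a - u b` between `(b - a) * ε b` and `(b - a) * ε a`,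
which forces `ε` to be antitone. The integral `∫ a..b, ε` obeys the same sandwich, so
`u + ∫ 0..·, ε` has increments bounded by `(y - x) * (ε x - ε y)`; these telescope along a
fine subdivision, so it is constant (the envelope formula `u a - u b = ∫ a..b, ε`).
Individual rationality then bounds `∫ 0..b, ε` by `u 0`, giving integrability, and `d` is the
limit of `u` at infinity. Conversely, the payment formula turns incentive compatibility into
`(c' - c) * ε c' ≤ ∫ c..c', ε`, which holds for antitone `ε` in either orientation.
-/

open MeasureTheory Set Filter Topology

theorem eq_of_abs_sub_le_mul_sub {f g : ℝ → ℝ} {a b : ℝ} (hab : a ≤ b)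
    (h : ∀ x y, a ≤ x → x ≤ y → y ≤ b → |f y - f x| ≤ (y - x) * (g x - g y)) :
    f b = f a := by
  have hsub : ∀ n : ℕ, (n + 1) * |f b - f a| ≤ (b - a) * (g a - g b) := by
    intro n
    have hn : (0 : ℝ) < n + 1 := by positivity
    set δ := (b - a) / (n + 1)
    have hδ : 0 ≤ δ := div_nonneg (sub_nonneg.2 hab) hn.le
    have hnδ : (n + 1) * δ = b - a := mul_div_cancel₀ _ hn.ne'
    let x : ℕ → ℝ := fun i => a + i * δ
    have hx0 : x 0 = a := by simp [x]
    have hxn : x (n + 1) = b := by simp only [x]; push_cast; linarith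
    have hstep : ∀ i ∈ Finset.range (n + 1),
        |f (x (i + 1)) - f (x i)| ≤ δ * (g (x i) - g (x (i + 1))) := by
      intro i hi
      have hi : (i : ℝ) + 1 ≤ n + 1 := by exact_mod_cast Finset.mem_range.1 hi
      have := h (x i) (x (i + 1)) (le_add_of_nonneg_right (by positivity))
        (by simp only [x]; push_cast; nlinarith) (by simp only [x]; push_cast; nlinarith)
      simpa [x, add_mul, add_sub_add_left_eq_sub] using this
    calc (n + 1) * |f b - f a|
        = (n + 1) * |∑ i ∈ Finset.range (n + 1), (f (x (i + 1)) - f (x i))| := by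
          rw [Finset.sum_range_sub (fun i => f (x i)), hx0, hxn]
      _ ≤ (n + 1) * ∑ i ∈ Finset.range (n + 1), δ * (g (x i) - g (x (i + 1))) := by
          gcongr
          exact (Finset.abs_sum_le_sum_abs _ _).trans (Finset.sum_le_sum hstep)
      _ = (b - a) * (g a - g b) := by
          rw [← Finset.mul_sum, Finset.sum_range_sub' (fun i => g (x i)), hx0, hxn,
            ← mul_assoc, hnδ]
  by_contra hne
  have hpos : 0 < |f b - f a| := abs_pos.2 (sub_ne_zero.2 hne)
  obtain ⟨n, hn⟩ := exists_nat_gt ((b - a) * (g a - g b) / |f b - f a|)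
  rw [div_lt_iff₀ hpos] at hn
  nlinarith [hsub n]

theorem AntitoneOn.sub_mul_le_intervalIntegral {ε : ℝ → ℝ} {a b : ℝ}
    (hε : AntitoneOn ε (uIcc a b)) : (b - a) * ε b ≤ ∫ x in a..b, ε x := by
  have hint := hε.intervalIntegrable (μ := volume)
  rcases le_total a b with hab | hba
  · rw [uIcc_of_le hab] at hε
    have := intervalIntegral.integral_mono_on hab intervalIntegrable_const hint
      fun x hx => hε hx ⟨hab, le_rfl⟩ hx.2
    simpa using this
  · rw [uIcc_of_ge hba] at hε
    have := intervalIntegral.integral_mono_on hba hint.symm intervalIntegrable_const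
      fun x hx => hε ⟨le_rfl, hba⟩ hx hx.1
    rw [intervalIntegral.integral_symm]
    simp only [intervalIntegral.integral_const, smul_eq_mul] at this
    linarith

theorem sub_eq_intervalIntegral_of_sandwich {u ε : ℝ → ℝ} {a b : ℝ} (hab : a ≤ b)
    (hε : AntitoneOn ε (Icc a b))
    (hu : ∀ x y, a ≤ x → x ≤ y → y ≤ b →
      (y - x) * ε y ≤ u x - u y ∧ u x - u y ≤ (y - x) * ε x) :
    u a - u b = ∫ x in a..b, ε x := by
  have hint : ∀ x ∈ Icc a b, IntervalIntegrable ε volume a x := fun x hx =>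
    (hε.mono (uIcc_of_le hx.1 ▸ Icc_subset_Icc_right hx.2)).intervalIntegrable
  have hconst := eq_of_abs_sub_le_mul_sub (f := fun x => u x + ∫ t in a..x, ε t) (g := ε) hab
    fun x y hax hxy hyb => by
      have hsub : AntitoneOn ε (uIcc x y) := hε.mono (uIcc_of_le hxy ▸ Icc_subset_Icc hax hyb)
      have hlow := hsub.sub_mul_le_intervalIntegral
      have hupp := (uIcc_comm x y ▸ hsub).sub_mul_le_intervalIntegral
      rw [intervalIntegral.integral_symm] at hupp
      rw [add_sub_add_comm, intervalIntegral.integral_interval_sub_left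
        (hint y ⟨hax.trans hxy, hyb⟩) (hint x ⟨hax, hxy.trans hyb⟩), abs_le]
      have := hu x y hax hxy hyb
      constructor <;> nlinarith
  simp only [intervalIntegral.integral_same, add_zero] at hconst
  linarith

namespace Mechanism

variable {π ε : ℝ → ℝ}

def utility (π ε : ℝ → ℝ) (c : ℝ) : ℝ := π c - c * ε c

def IsIncentiveCompatible (π ε : ℝ → ℝ) : Prop :=
  ∀ c c', 0 ≤ c → 0 ≤ c' → π c' - c * ε c' ≤ π c - c * ε c

def IsIndividuallyRational (π ε : ℝ → ℝ) : Prop :=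
  ∀ c, 0 ≤ c → 0 ≤ utility π ε c

namespace IsIncentiveCompatible

theorem utility_sandwich (hIC : IsIncentiveCompatible π ε) {a b : ℝ} (ha : 0 ≤ a)
    (hab : a ≤ b) :
    (b - a) * ε b ≤ utility π ε a - utility π ε b ∧
      utility π ε a - utility π ε b ≤ (b - a) * ε a := by
  have h₁ := hIC a b ha (ha.trans hab)
  have h₂ := hIC b a (ha.trans hab) ha
  unfold utility
  constructor <;> linarith

theorem antitoneOn (hIC : IsIncentiveCompatible π ε) : AntitoneOn ε (Ici 0) := by
  intro a ha b _ hab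
  rcases hab.eq_or_lt with rfl | hlt
  · exact le_rfl
  · obtain ⟨h₁, h₂⟩ := hIC.utility_sandwich ha hab
    exact le_of_mul_le_mul_left (h₁.trans h₂) (sub_pos.2 hlt)

theorem utility_sub_eq_intervalIntegral (hIC : IsIncentiveCompatible π ε) {a b : ℝ}
    (ha : 0 ≤ a) (hab : a ≤ b) :
    utility π ε a - utility π ε b = ∫ x in a..b, ε x :=
  sub_eq_intervalIntegral_of_sandwich hab (hIC.antitoneOn.mono (Icc_subset_Ici_self.trans
    (Ici_subset_Ici.2 ha))) fun _ _ hax hxy _ => hIC.utility_sandwich (ha.trans hax) hxy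

theorem integrableOn_Ioi (hIC : IsIncentiveCompatible π ε) (hIR : IsIndividuallyRational π ε)
    (hε_nonneg : ∀ c, 0 ≤ c → 0 ≤ ε c) : IntegrableOn ε (Ioi 0) := by
  refine integrableOn_Ioi_of_intervalIntegral_norm_bounded (utility π ε 0) 0
    (fun n => (hIC.antitoneOn.mono
      (uIcc_of_le (Nat.cast_nonneg (α := ℝ) n) ▸ Icc_subset_Ici_self) |>.intervalIntegrable).1)
    tendsto_natCast_atTop_atTop (Eventually.of_forall fun n => ?_)
  have hn : (0 : ℝ) ≤ n := n.cast_nonneg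
  rw [intervalIntegral.integral_congr fun x hx => Real.norm_of_nonneg
      (hε_nonneg x (uIcc_of_le hn ▸ hx).1),
    ← hIC.utility_sub_eq_intervalIntegral le_rfl hn]
  linarith [hIR n hn]

theorem exists_payment_eq (hIC : IsIncentiveCompatible π ε) (hIR : IsIndividuallyRational π ε)
    (hε_nonneg : ∀ c, 0 ≤ c → 0 ≤ ε c) :
    ∃ d : ℝ, 0 ≤ d ∧ ∀ c, 0 ≤ c → π c = (∫ z in Ioi c, ε z) + c * ε c + d := by
  have hint := hIC.integrableOn_Ioi hIR hε_nonneg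
  refine ⟨utility π ε 0 - ∫ z in Ioi 0, ε z, ?_, fun c hc => ?_⟩
  · have hlim : Tendsto (utility π ε) atTop (𝓝 (utility π ε 0 - ∫ z in Ioi 0, ε z)) :=
      (tendsto_const_nhds.sub (intervalIntegral_tendsto_integral_Ioi 0 hint tendsto_id)).congr'
        (eventually_ge_atTop 0 |>.mono fun b hb => by
          rw [id, ← hIC.utility_sub_eq_intervalIntegral le_rfl hb, sub_sub_cancel])
    exact ge_of_tendsto hlim (eventually_ge_atTop 0 |>.mono hIR)
  · have := hIC.utility_sub_eq_intervalIntegral le_rfl hc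
    rw [← intervalIntegral.integral_Ioi_sub_Ioi hint hc] at this
    unfold utility at this ⊢
    linarith

end IsIncentiveCompatible

theorem isIncentiveCompatible_of_payment_eq {d : ℝ} (hε : AntitoneOn ε (Ici 0))
    (hint : IntegrableOn ε (Ioi 0))
    (hπ : ∀ c, 0 ≤ c → π c = (∫ z in Ioi c, ε z) + c * ε c + d) :
    IsIncentiveCompatible π ε := by
  intro c c' hc hc'
  have hdiff := intervalIntegral.integral_Ioi_sub_Ioi' (hint.mono_set (Ioi_subset_Ioi hc))
    (hint.mono_set (Ioi_subset_Ioi hc'))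
  have hbound := (hε.mono fun x hx => (le_min hc hc').trans hx.1).sub_mul_le_intervalIntegral
  rw [hπ c hc, hπ c' hc']
  linarith

theorem isIndividuallyRational_of_payment_eq {d : ℝ} (hd : 0 ≤ d)
    (hε_nonneg : ∀ c, 0 ≤ c → 0 ≤ ε c)
    (hπ : ∀ c, 0 ≤ c → π c = (∫ z in Ioi c, ε z) + c * ε c + d) :
    IsIndividuallyRational π ε := by
  intro c hc
  unfold utility
  have := setIntegral_nonneg (μ := volume) measurableSet_Ioi
    fun z (hz : c < z) => hε_nonneg z (hc.trans hz.le)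
  rw [hπ c hc]
  linarith

end Mechanism

/-- A pair `(π, ε)` (payment rule, allocation rule, with `ε`
nonnegative on `[0,∞)`) satisfies incentive compatibility and individual
rationality if and only if `ε` is nonincreasing on `[0,∞)`, `ε` is integrable
on `(0,∞)`, and there is a constant `d ≥ 0` with
`π(c) = ∫_c^∞ ε(z) dz + c·ε(c) + d` for every `c ≥ 0`. -/
theorem ic_ir_characterization
    (π ε : ℝ → ℝ) (hε_nonneg : ∀ c, 0 ≤ c → 0 ≤ ε c) :
    ((∀ c c', 0 ≤ c → 0 ≤ c' → π c' - c * ε c' ≤ π c - c * ε c) ∧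
     (∀ c, 0 ≤ c → 0 ≤ π c - c * ε c))
    ↔
    (AntitoneOn ε (Set.Ici 0) ∧ IntegrableOn ε (Set.Ioi 0) ∧
     ∃ d : ℝ, 0 ≤ d ∧ ∀ c, 0 ≤ c →
       π c = (∫ z in Set.Ioi c, ε z) + c * ε c + d) := by
  constructor
  · rintro ⟨hIC, hIR⟩
    have hIC : Mechanism.IsIncentiveCompatible π ε := hIC
    exact ⟨hIC.antitoneOn, hIC.integrableOn_Ioi hIR hε_nonneg,
      hIC.exists_payment_eq hIR hε_nonneg⟩
  · rintro ⟨hε, hint, d, hd, hπ⟩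
    exact ⟨Mechanism.isIncentiveCompatible_of_payment_eq hε hint hπ,
      Mechanism.isIndividuallyRational_of_payment_eq hd hε_nonneg hπ⟩
end

section
/- If the pair (π, ε) satisfies IC, then ε is nonincreasing on [0,∞) and the payment satisfies the Myerson identity π(c) = π(0) + c·ε(c) − ∫₀^c ε(z) dz for every c ≥ 0. -/
/-
Incentive compatibility says exactly that `-ε` is a subgradient of the utility
`U c = π c - c * ε c` on `[0, ∞)`: `U c ≥ U c' - ε c' * (c - c')`. A subgradient selection is
monotone, so `ε` is antitone; it bounds the difference quotients of `U` from both sides, so `U` is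
Lipschitz on compact intervals and differentiable with derivative `-ε` wherever `ε` is continuous,
i.e. off a countable set. The fundamental theorem of calculus with a countable exceptional set then
gives `U c - U 0 = -∫₀ᶜ ε`, which is the Myerson identity.
-/

open MeasureTheory Set intervalIntegral

open scoped Topology

def IsSubgradientOn (f g : ℝ → ℝ) (s : Set ℝ) : Prop :=
  ∀ x ∈ s, ∀ y ∈ s, f x + g x * (y - x) ≤ f y

namespace IsSubgradientOn

variable {f g : ℝ → ℝ} {s t : Set ℝ}

theorem mono (h : IsSubgradientOn f g s) (hts : t ⊆ s) : IsSubgradientOn f g t :=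
  fun x hx y hy => h x (hts hx) y (hts hy)

theorem monotoneOn (h : IsSubgradientOn f g s) : MonotoneOn g s := by
  intro x hx y hy hxy
  rcases hxy.eq_or_lt with rfl | hlt
  · exact le_rfl
  · have := h x hx y hy
    have := h y hy x hx
    nlinarith

theorem abs_sub_sub_mul_le (h : IsSubgradientOn f g s) {x y : ℝ} (hx : x ∈ s) (hy : y ∈ s) :
    |f y - f x - g x * (y - x)| ≤ |g y - g x| * |y - x| := by
  have lower := h x hx y hy
  have upper := h y hy x hx
  rw [abs_of_nonneg (by linarith), ← abs_mul]
  exact le_trans (by linarith) (le_abs_self _)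

theorem hasDerivWithinAt (h : IsSubgradientOn f g s) {x : ℝ} (hx : x ∈ s)
    (hg : ContinuousWithinAt g s x) : HasDerivWithinAt f (g x) s x := by
  rw [hasDerivWithinAt_iff_isLittleO, Asymptotics.isLittleO_iff]
  intro δ hδ
  have hclose : ∀ᶠ y in 𝓝[s] x, |g y - g x| < δ :=
    (Metric.tendsto_nhds.mp hg) δ hδ
  filter_upwards [hclose, self_mem_nhdsWithin] with y hgy hy
  simp only [Real.norm_eq_abs, smul_eq_mul, mul_comm (y - x)]
  exact (h.abs_sub_sub_mul_le hx hy).trans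
    (mul_le_mul_of_nonneg_right hgy.le (abs_nonneg _))

theorem lipschitzOnWith (h : IsSubgradientOn f g s) {M : ℝ} (hM : ∀ x ∈ s, |g x| ≤ M) :
    LipschitzOnWith M.toNNReal f s := by
  refine LipschitzOnWith.of_dist_le' fun x hx y hy => ?_
  have hx' : |g x * (x - y)| ≤ M * |x - y| := by
    rw [abs_mul]; exact mul_le_mul_of_nonneg_right (hM x hx) (abs_nonneg _)
  have hy' : |g y * (x - y)| ≤ M * |x - y| := by
    rw [abs_mul]; exact mul_le_mul_of_nonneg_right (hM y hy) (abs_nonneg _)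
  have := h x hx y hy
  have := h y hy x hx
  rw [Real.dist_eq, Real.dist_eq, abs_le]
  rw [abs_le] at hx' hy'
  constructor <;> linarith

theorem continuousOn_Icc {a b : ℝ} (h : IsSubgradientOn f g (Icc a b)) :
    ContinuousOn f (Icc a b) := by
  refine (h.lipschitzOnWith (M := |g a| + |g b|) fun x hx => ?_).continuousOn
  have ha : a ∈ Icc a b := ⟨le_rfl, hx.1.trans hx.2⟩
  have hb : b ∈ Icc a b := ⟨hx.1.trans hx.2, le_rfl⟩
  have hax := h.monotoneOn ha hx hx.1
  have hxb := h.monotoneOn hx hb hx.2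
  rw [abs_le]
  constructor <;>
    linarith [neg_abs_le (g a), le_abs_self (g b), abs_nonneg (g a), abs_nonneg (g b)]

theorem integral_eq_sub {a b : ℝ} (hab : a ≤ b) (h : IsSubgradientOn f g (Icc a b)) :
    ∫ x in a..b, g x = f b - f a := by
  have hg := h.monotoneOn
  refine integral_eq_of_hasDerivAt_off_countable_of_le f g hab
    hg.countable_not_continuousWithinAt h.continuousOn_Icc (fun x ⟨hx, hcont⟩ => ?_)
    (hg.mono (uIcc_of_le hab).subset).intervalIntegrable
  have hcont : ContinuousWithinAt g (Icc a b) x := by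
    by_contra hdisc
    exact hcont ⟨Ioo_subset_Icc_self hx, hdisc⟩
  exact (h.hasDerivWithinAt (Ioo_subset_Icc_self hx) hcont).hasDerivAt (Icc_mem_nhds hx.1 hx.2)

end IsSubgradientOn

theorem ic_implies_myerson_general
    (π ε : ℝ → ℝ)
    (hIC : ∀ c c', 0 ≤ c → 0 ≤ c' → π c' - c * ε c' ≤ π c - c * ε c) :
    AntitoneOn ε (Set.Ici 0) ∧
    ∀ c, 0 ≤ c → π c = π 0 + c * ε c - ∫ z in (0:ℝ)..c, ε z := by
  have hsub : IsSubgradientOn (fun c => π c - c * ε c) (fun c => -ε c) (Ici 0) :=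
    fun x hx y hy => by linarith [hIC y x hy hx]
  refine ⟨fun a ha b hb hab => neg_le_neg_iff.mp (hsub.monotoneOn ha hb hab), fun c hc => ?_⟩
  have := (hsub.mono Icc_subset_Ici_self).integral_eq_sub hc
  rw [intervalIntegral.integral_neg] at this
  linarith

/-- If `(π, ε)` is incentive compatible, then the allocation `ε`
is nonincreasing on `[0,∞)` and the payment satisfies the Myerson identity
`π(c) = π(0) + c·ε(c) − ∫₀^c ε(z) dz` for every `c ≥ 0`. -/
theorem ic_implies_myerson
    (π ε : ℝ → ℝ) (hε_nonneg : ∀ c, 0 ≤ c → 0 ≤ ε c)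
    (hIC : ∀ c c', 0 ≤ c → 0 ≤ c' → π c' - c * ε c' ≤ π c - c * ε c) :
    AntitoneOn ε (Set.Ici 0) ∧
    ∀ c, 0 ≤ c → π c = π 0 + c * ε c - ∫ z in (0:ℝ)..c, ε z :=
  ic_implies_myerson_general π ε hIC
end

section
/- Let f : [0,∞) → (0,∞) be a probability density (∫₀^∞ f = 1) with cumulative distribution function F(z) = ∫₀^z f(c) dc, let ε : [0,∞) → [0,∞) be measurable and integrable on (0,∞) with c ↦ c·ε(c)·f(c) integrable on (0,∞), let d ≥ 0, and suppose π(c) = ∫_c^∞ ε(z) dz + c·ε(c) + d for every c ≥ 0. Then the expected payment equals the expected virtual-cost-weighted allocation plus d: ∫₀^∞ π(c)·f(c) dc = ∫₀^∞ ε(c)·(c + F(c)/f(c))·f(c) dc + d. -/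
/-!
With `G c = ∫_c^∞ ε`, the payment integrand is `G f + c ε f + d f` and, since `f > 0`, the
virtual-cost integrand is `c ε f + ε F`. Everything therefore reduces to
`∫₀^∞ G f = ∫₀^∞ ε F`, which is Tonelli's theorem for `(c, z) ↦ f c * ε z` on `{c < z}`.
Both sides are integrable because `G` and `F` are monotone and bounded by `∫ ε` and `∫ f`.
-/

open MeasureTheory Set intervalIntegral

open scoped ENNReal

namespace MeasureTheory

section General

variable {α : Type*} [MeasurableSpace α] {μ : Measure α} {f : α → ℝ}

theorem norm_setIntegral_le_integral_norm (s : Set α) (hf : Integrable f μ) :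
    ‖∫ x in s, f x ∂μ‖ ≤ ∫ x, ‖f x‖ ∂μ :=
  (norm_integral_le_integral_norm f).trans <|
    setIntegral_le_integral hf.norm (ae_of_all _ fun _ => norm_nonneg _)

theorem ofReal_mul_setIntegral {r : ℝ} (hr : 0 ≤ r) (s : Set α) (hf : Integrable f μ)
    (hf0 : 0 ≤ᵐ[μ] f) :
    ENNReal.ofReal (r * ∫ x in s, f x ∂μ)
      = ENNReal.ofReal r * ∫⁻ x in s, ENNReal.ofReal (f x) ∂μ := by
  rw [ENNReal.ofReal_mul hr,
    ofReal_integral_eq_lintegral_ofReal hf.integrableOn (ae_restrict_of_ae hf0)]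

end General

section LinearOrder

variable {α : Type*} [LinearOrder α] [MeasurableSpace α] {μ : Measure α} {f g : α → ℝ}

theorem antitone_setIntegral_Ioi (hg : Integrable g μ) (hg0 : 0 ≤ᵐ[μ] g) :
    Antitone fun x => ∫ y in Ioi x, g y ∂μ := fun _ _ hxy =>
  setIntegral_mono_set hg.integrableOn (ae_restrict_of_ae hg0)
    (Ioi_subset_Ioi hxy).eventuallyLE

theorem monotone_setIntegral_Iio (hf : Integrable f μ) (hf0 : 0 ≤ᵐ[μ] f) :
    Monotone fun y => ∫ x in Iio y, f x ∂μ := fun _ _ hxy =>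
  setIntegral_mono_set hf.integrableOn (ae_restrict_of_ae hf0)
    (Iio_subset_Iio hxy).eventuallyLE

variable [TopologicalSpace α] [OrderClosedTopology α] [BorelSpace α]

theorem setIntegral_Ioi_restrict_Ioi {a b : α} (hab : a ≤ b) :
    ∫ x in Ioi b, f x ∂(μ.restrict (Ioi a)) = ∫ x in Ioi b, f x ∂μ := by
  rw [Measure.restrict_restrict measurableSet_Ioi, inter_eq_left.2 (Ioi_subset_Ioi hab)]

theorem Integrable.mul_setIntegral_Ioi (hf : Integrable f μ) (hg : Integrable g μ)
    (hg0 : 0 ≤ᵐ[μ] g) : Integrable (fun x => f x * ∫ y in Ioi x, g y ∂μ) μ :=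
  hf.mul_bdd (antitone_setIntegral_Ioi hg hg0).measurable.aestronglyMeasurable
    (ae_of_all _ fun x => norm_setIntegral_le_integral_norm (Ioi x) hg)

theorem Integrable.mul_setIntegral_Iio (hg : Integrable g μ) (hf : Integrable f μ)
    (hf0 : 0 ≤ᵐ[μ] f) : Integrable (fun y => g y * ∫ x in Iio y, f x ∂μ) μ :=
  hg.mul_bdd (monotone_setIntegral_Iio hf hf0).measurable.aestronglyMeasurable
    (ae_of_all _ fun y => norm_setIntegral_le_integral_norm (Iio y) hf)

variable [SecondCountableTopology α] [SFinite μ]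

theorem lintegral_mul_setLIntegral_Ioi {f g : α → ℝ≥0∞}
    (hf : AEMeasurable f μ) (hg : AEMeasurable g μ) :
    ∫⁻ x, f x * ∫⁻ y in Ioi x, g y ∂μ ∂μ = ∫⁻ y, g y * ∫⁻ x in Iio y, f x ∂μ ∂μ := by
  have h_unc : Function.uncurry (fun x y => (Ioi x).indicator (fun y => f x * g y) y)
      = {p : α × α | p.1 < p.2}.indicator (fun p => f p.1 * g p.2) := by
    ext ⟨x, y⟩; simp [indicator]
  have h_swap : ∀ y, (fun x => (Ioi x).indicator (fun y => f x * g y) y)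
      = (Iio y).indicator (fun x => f x * g y) := fun y => by
    ext x; simp [indicator]
  have := lintegral_lintegral_swap (μ := μ) (ν := μ)
    (f := fun x y => (Ioi x).indicator (fun y => f x * g y) y)
    (h_unc ▸ (hf.comp_fst.mul hg.comp_snd).indicator measurableSet_lt')
  simp only [lintegral_indicator measurableSet_Ioi, h_swap, lintegral_indicator measurableSet_Iio,
    lintegral_const_mul'' _ hg.restrict, lintegral_mul_const'' _ hf.restrict] at this
  simpa only [mul_comm (g _)] using this

theorem integral_mul_setIntegral_Ioi (hf : Integrable f μ) (hg : Integrable g μ)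
    (hf0 : 0 ≤ᵐ[μ] f) (hg0 : 0 ≤ᵐ[μ] g) :
    ∫ x, f x * ∫ y in Ioi x, g y ∂μ ∂μ = ∫ y, g y * ∫ x in Iio y, f x ∂μ ∂μ := by
  have h_left : 0 ≤ᵐ[μ] fun x => f x * ∫ y in Ioi x, g y ∂μ := by
    filter_upwards [hf0] with x hx using mul_nonneg hx (setIntegral_nonneg_of_ae hg0)
  have h_right : 0 ≤ᵐ[μ] fun y => g y * ∫ x in Iio y, f x ∂μ := by
    filter_upwards [hg0] with y hy using mul_nonneg hy (setIntegral_nonneg_of_ae hf0)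
  rw [integral_eq_lintegral_of_nonneg_ae h_left
      (hf.mul_setIntegral_Ioi hg hg0).aestronglyMeasurable,
    integral_eq_lintegral_of_nonneg_ae h_right
      (hg.mul_setIntegral_Iio hf hf0).aestronglyMeasurable]
  congr 1
  calc ∫⁻ x, ENNReal.ofReal (f x * ∫ y in Ioi x, g y ∂μ) ∂μ
      = ∫⁻ x, ENNReal.ofReal (f x) * ∫⁻ y in Ioi x, ENNReal.ofReal (g y) ∂μ ∂μ :=
        lintegral_congr_ae <| by
          filter_upwards [hf0] with x hx using ofReal_mul_setIntegral hx _ hg hg0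
    _ = ∫⁻ y, ENNReal.ofReal (g y) * ∫⁻ x in Iio y, ENNReal.ofReal (f x) ∂μ ∂μ :=
        lintegral_mul_setLIntegral_Ioi hf.aemeasurable.ennreal_ofReal
          hg.aemeasurable.ennreal_ofReal
    _ = ∫⁻ y, ENNReal.ofReal (g y * ∫ x in Iio y, f x ∂μ) ∂μ :=
        lintegral_congr_ae <| by
          filter_upwards [hg0] with y hy using (ofReal_mul_setIntegral hy _ hf hf0).symm

end LinearOrder

theorem setIntegral_Iio_restrict_Ioi {a b : ℝ} (hab : a ≤ b) (f : ℝ → ℝ) :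
    ∫ x in Iio b, f x ∂(volume.restrict (Ioi a)) = ∫ x in a..b, f x := by
  rw [Measure.restrict_restrict measurableSet_Iio, Iio_inter_Ioi, integral_of_le hab,
    integral_Ioc_eq_integral_Ioo]

end MeasureTheory

theorem expected_payment_virtual_cost_general
    (f ε F π : ℝ → ℝ) (d : ℝ)
    (hf_pos : ∀ c, 0 ≤ c → 0 < f c)
    (hf_int : IntegrableOn f (Set.Ioi 0))
    (hf_prob : ∫ c in Set.Ioi 0, f c = 1)
    (hF : ∀ z, F z = ∫ c in (0:ℝ)..z, f c)
    (hε_nonneg : ∀ z, 0 ≤ z → 0 ≤ ε z)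
    (hε_int : IntegrableOn ε (Set.Ioi 0))
    (hcε_int : IntegrableOn (fun c => c * ε c * f c) (Set.Ioi 0))
    (hπ : ∀ c, 0 ≤ c → π c = (∫ z in Set.Ioi c, ε z) + c * ε c + d) :
    ∫ c in Set.Ioi 0, π c * f c
      = (∫ c in Set.Ioi 0, ε c * (c + F c / f c) * f c) + d := by
  set ν := volume.restrict (Ioi (0 : ℝ))
  have hf0 : 0 ≤ᵐ[ν] f :=
    (ae_restrict_iff' measurableSet_Ioi).2 (ae_of_all _ fun c hc => (hf_pos c hc.le).le)
  have hε0 : 0 ≤ᵐ[ν] ε :=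
    (ae_restrict_iff' measurableSet_Ioi).2 (ae_of_all _ fun c hc => hε_nonneg c hc.le)
  have h_payment : (fun c => π c * f c) =ᵐ[ν]
      fun c => f c * (∫ z in Ioi c, ε z ∂ν) + c * ε c * f c + d * f c := by
    filter_upwards [ae_restrict_mem measurableSet_Ioi] with c hc
    rw [hπ c hc.le, setIntegral_Ioi_restrict_Ioi hc.le]
    ring
  have h_virtual : (fun c => ε c * (c + F c / f c) * f c) =ᵐ[ν]
      fun c => c * ε c * f c + ε c * ∫ x in Iio c, f x ∂ν := by
    filter_upwards [ae_restrict_mem measurableSet_Ioi] with c hc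
    have hfc : f c ≠ 0 := (hf_pos c hc.le).ne'
    rw [setIntegral_Iio_restrict_Ioi hc.le, ← hF]
    field_simp
  have h_revenue := hf_int.mul_setIntegral_Ioi hε_int hε0
  calc ∫ c in Ioi 0, π c * f c
      = (∫ c, f c * (∫ z in Ioi c, ε z ∂ν) ∂ν + ∫ c, c * ε c * f c ∂ν) + d := by
        rw [integral_congr_ae h_payment,
          MeasureTheory.integral_add (h_revenue.fun_add hcε_int) (hf_int.const_mul d),
          MeasureTheory.integral_add h_revenue hcε_int, MeasureTheory.integral_const_mul,
          hf_prob, mul_one]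
    _ = (∫ c in Ioi 0, ε c * (c + F c / f c) * f c) + d := by
        rw [integral_congr_ae h_virtual,
          MeasureTheory.integral_add hcε_int (hε_int.mul_setIntegral_Iio hf_int hf0),
          integral_mul_setIntegral_Ioi hf_int hε_int hf0 hε0]
        ring

/-- For a probability density `f` on `[0,∞)` with CDF `F`, an
allocation `ε` (measurable, nonnegative, integrable on `(0,∞)`, with
`c ↦ c·ε(c)·f(c)` integrable), a constant `d ≥ 0`, and a payment
`π(c) = ∫_c^∞ ε(z) dz + c·ε(c) + d`, the expected payment equals the expected
virtual-cost-weighted allocation plus `d`: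
`∫₀^∞ π(c) f(c) dc = ∫₀^∞ ε(c)(c + F(c)/f(c)) f(c) dc + d`. -/
theorem expected_payment_virtual_cost
    (f ε F π : ℝ → ℝ) (d : ℝ) (hd : 0 ≤ d)
    (hf_pos : ∀ c, 0 ≤ c → 0 < f c)
    (hf_int : IntegrableOn f (Set.Ioi 0))
    (hf_prob : ∫ c in Set.Ioi 0, f c = 1)
    (hF : ∀ z, F z = ∫ c in (0:ℝ)..z, f c)
    (hε_meas : Measurable ε)
    (hε_nonneg : ∀ z, 0 ≤ z → 0 ≤ ε z)
    (hε_int : IntegrableOn ε (Set.Ioi 0))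
    (hcε_int : IntegrableOn (fun c => c * ε c * f c) (Set.Ioi 0))
    (hπ : ∀ c, 0 ≤ c → π c = (∫ z in Set.Ioi c, ε z) + c * ε c + d) :
    ∫ c in Set.Ioi 0, π c * f c
      = (∫ c in Set.Ioi 0, ε c * (c + F c / f c) * f c) + d :=
  expected_payment_virtual_cost_general f ε F π d hf_pos hf_int hf_prob hF hε_nonneg hε_int hcε_int
    hπ
end

section
/- At every minimizer (p*, ε*) of Problem 3, at most one client has selection probability strictly greater than 1/N; that is, the set {k : p*ₖ > 1/N} has cardinality at most one. -/
open Finset MeasureTheory Real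

/-!
Moving mass `t` from client `i` to client `j`, while keeping the ratios `εᵢ/pᵢ` and `εⱼ/pⱼ`
fixed, leaves every term `pₖ²/εₖ²` unchanged, and it leaves `‖p − pᵘ‖₁` unchanged as long as
both probabilities stay above `1/N`. The objective is therefore affine in `t` along this
transfer, so at a minimizer its slope vanishes and every point of the transfer is again a
minimizer. On the other hand, minimality in the single variable `εᵢ` gives the stationarity
condition `vᵢ (εᵢ/pᵢ)³ S pᵢ = η Q`, where `S` is the square root in the objective. Along the
transfer `εᵢ/pᵢ` and `S` are fixed while `pᵢ` moves, so two clients above `1/N` are impossible.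
-/

open Function

theorem Fintype.sum_sub_sum_eq_of_eq_off_pair {ι M : Type*} [Fintype ι] [AddCommGroup M]
    {f g : ι → M} {i j : ι} (hij : i ≠ j) (h : ∀ k, k ≠ i → k ≠ j → f k = g k) :
    ∑ k, f k - ∑ k, g k = (f i - g i) + (f j - g j) := by
  rw [← Finset.sum_sub_distrib]
  exact Fintype.sum_eq_add i j hij fun k hk => sub_eq_zero.mpr (h k hk.1 hk.2)

theorem stationary_of_isMinOn {η K B c x₀ : ℝ} (hK : 0 ≤ K) (hB : 0 < B) (hx₀ : 0 < x₀)
    (hmin : IsMinOn (fun x => η * √(K + B / x ^ 2) + c * x) (Set.Ioi 0) x₀) :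
    c * x₀ ^ 3 * √(K + B / x₀ ^ 2) = η * B := by
  have hpos : 0 < K + B / x₀ ^ 2 := by positivity
  have hsq : HasDerivAt (fun x : ℝ => x ^ 2) (2 * x₀) x₀ := by
    simpa using hasDerivAt_pow 2 x₀
  have hinner : HasDerivAt (fun x => K + B / x ^ 2) (B * (-(2 * x₀) / (x₀ ^ 2) ^ 2)) x₀ := by
    simpa only [div_eq_mul_inv, Pi.inv_apply] using
      ((hsq.inv (by positivity)).const_mul B).const_add K
  have hderiv := ((hinner.sqrt hpos.ne').const_mul η).add ((hasDerivAt_id x₀).const_mul c)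
  have hzero := (hmin.isLocalMin (Ioi_mem_nhds hx₀)).hasDerivAt_eq_zero hderiv
  have hS : 0 < √(K + B / x₀ ^ 2) := Real.sqrt_pos.mpr hpos
  generalize √(K + B / x₀ ^ 2) = S at hzero hS ⊢
  field_simp at hzero
  linear_combination hzero

variable {N : ℕ} {η Q : ℝ} {v p ε : Fin N → ℝ} {i j : Fin N}

noncomputable def l1DistUniform (p : Fin N → ℝ) : ℝ := ∑ k, |p k - 1 / (N : ℝ)|

theorem objG_eq (η Q : ℝ) (v p ε : Fin N → ℝ) :
    objG η Q v p ε =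
      η * (l1DistUniform p + √(l1DistUniform p ^ 2 + Q * dpError p ε)) + ∑ k, ε k * v k :=
  rfl

theorem one_div_card_pos (i : Fin N) : 0 < 1 / (N : ℝ) :=
  one_div_pos.mpr (Nat.cast_pos.mpr i.pos)

theorem dpError_update_s12 (hp : p i ≠ 0) (x : ℝ) :
    dpError p (update ε i x) =
      p i ^ 2 / x ^ 2 + ∑ k ∈ univ.erase i, if p k ≠ 0 then p k ^ 2 / ε k ^ 2 else 0 := by
  rw [dpError, ← add_sum_erase _ _ (mem_univ i)]
  refine congrArg₂ (· + ·) (by simp [hp]) (sum_congr rfl fun k hk => ?_)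
  rw [update_of_ne (ne_of_mem_erase hk)]

theorem sum_update_mul_s12 (x : ℝ) :
    ∑ k, update ε i x k * v k = x * v i + ∑ k ∈ univ.erase i, ε k * v k := by
  rw [← add_sum_erase _ _ (mem_univ i)]
  refine congrArg₂ (· + ·) (by simp) (sum_congr rfl fun k hk => ?_)
  rw [update_of_ne (ne_of_mem_erase hk)]

theorem Feasible.update (h : Feasible p ε) {x : ℝ} (hx : 0 < x) :
    Feasible p (update ε i x) := by
  obtain ⟨hsum, hp, hε, hpε⟩ := h
  refine ⟨hsum, hp, fun k => ?_, fun k hk => ?_⟩ <;>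
    rcases eq_or_ne k i with rfl | hki <;> simp_all [update_of_ne, hx.le]

theorem IsMinimizer.stationary (h : IsMinimizer η Q v p ε) (hQ : 0 < Q) (hi : 0 < p i) :
    v i * (ε i / p i) ^ 3 * √(l1DistUniform p ^ 2 + Q * dpError p ε) * p i = η * Q := by
  set A := l1DistUniform p
  set R := ∑ k ∈ univ.erase i, if p k ≠ 0 then p k ^ 2 / ε k ^ 2 else 0
  set C := ∑ k ∈ univ.erase i, ε k * v k
  have hR : 0 ≤ R := sum_nonneg fun k _ => by split_ifs <;> positivity
  have hεi : 0 < ε i := h.1.2.2.2 i hi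
  have hobj : ∀ x, objG η Q v p (update ε i x) =
      η * A + C + (η * √((A ^ 2 + Q * R) + Q * p i ^ 2 / x ^ 2) + v i * x) := fun x => by
    have harg : A ^ 2 + Q * (p i ^ 2 / x ^ 2 + R) = (A ^ 2 + Q * R) + Q * p i ^ 2 / x ^ 2 := by
      ring
    rw [objG_eq, dpError_update_s12 hi.ne', sum_update_mul_s12, harg]
    ring
  have hmin : IsMinOn (fun x => η * √((A ^ 2 + Q * R) + Q * p i ^ 2 / x ^ 2) + v i * x)
      (Set.Ioi 0) (ε i) := fun x hx => by
    have hle := h.2 _ _ (h.1.update (i := i) hx)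
    conv at hle => lhs; rw [← update_eq_self i ε]
    rw [hobj, hobj] at hle
    simpa using hle
  have hdp : dpError p ε = R + p i ^ 2 / ε i ^ 2 := by
    rw [← update_eq_self i ε, dpError_update_s12 hi.ne', update_eq_self, add_comm]
  have := stationary_of_isMinOn (by positivity) (by positivity) hεi hmin
  rw [hdp, mul_add Q, ← add_assoc, ← mul_div_assoc]
  generalize √(A ^ 2 + Q * R + Q * p i ^ 2 / ε i ^ 2) = S at this ⊢
  field_simp
  linear_combination this

section Transfer

noncomputable def transferProb (p : Fin N → ℝ) (i j : Fin N) (t : ℝ) : Fin N → ℝ :=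
  update (update p i (p i - t)) j (p j + t)

noncomputable def transferPriv (p ε : Fin N → ℝ) (i j : Fin N) (t : ℝ) : Fin N → ℝ :=
  update (update ε i (ε i / p i * (p i - t))) j (ε j / p j * (p j + t))

variable {t : ℝ} {k : Fin N}

theorem transferProb_left (hij : i ≠ j) : transferProb p i j t i = p i - t := by
  simp [transferProb, hij]

theorem transferProb_right : transferProb p i j t j = p j + t := by
  simp [transferProb]

theorem transferProb_of_ne (hki : k ≠ i) (hkj : k ≠ j) : transferProb p i j t k = p k := by
  simp [transferProb, hki, hkj]

theorem transferPriv_left (hij : i ≠ j) : transferPriv p ε i j t i = ε i / p i * (p i - t) := by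
  simp [transferPriv, hij]

theorem transferPriv_right : transferPriv p ε i j t j = ε j / p j * (p j + t) := by
  simp [transferPriv]

theorem transferPriv_of_ne (hki : k ≠ i) (hkj : k ≠ j) : transferPriv p ε i j t k = ε k := by
  simp [transferPriv, hki, hkj]

theorem Feasible.transfer (h : Feasible p ε) (hij : i ≠ j) (hpi : 0 < p i) (hpj : 0 < p j)
    (hti : 0 ≤ p i - t) (htj : 0 ≤ p j + t) :
    Feasible (transferProb p i j t) (transferPriv p ε i j t) := by
  obtain ⟨hsum, hp, hε, hpε⟩ := h
  have hri : 0 < ε i / p i := div_pos (hpε i hpi) hpi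
  have hrj : 0 < ε j / p j := div_pos (hpε j hpj) hpj
  refine ⟨?_, fun k => ?_, fun k => ?_, fun k => ?_⟩
  · have := Fintype.sum_sub_sum_eq_of_eq_off_pair hij (f := transferProb p i j t) (g := p)
      fun k hki hkj => transferProb_of_ne hki hkj
    rw [transferProb_left hij, transferProb_right, hsum] at this
    linarith
  all_goals
    rcases eq_or_ne k i with rfl | hki
    · simp only [transferProb_left hij, transferPriv_left hij]
      first | exact hti | exact mul_nonneg hri.le hti | exact mul_pos hri
    rcases eq_or_ne k j with rfl | hkj
    · simp only [transferProb_right, transferPriv_right]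
      first | exact htj | exact mul_nonneg hrj.le htj | exact mul_pos hrj
    simp only [transferProb_of_ne hki hkj, transferPriv_of_ne hki hkj]
  exacts [hp k, hε k, hpε k]

theorem l1DistUniform_transfer (hij : i ≠ j) (hi : 1 / (N : ℝ) ≤ p i) (hj : 1 / (N : ℝ) ≤ p j)
    (hti : 1 / (N : ℝ) ≤ p i - t) (htj : 1 / (N : ℝ) ≤ p j + t) :
    l1DistUniform (transferProb p i j t) = l1DistUniform p := by
  rw [← sub_eq_zero, l1DistUniform, l1DistUniform,
    Fintype.sum_sub_sum_eq_of_eq_off_pair hij fun k hki hkj => by rw [transferProb_of_ne hki hkj],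
    transferProb_left hij, transferProb_right, abs_of_nonneg (sub_nonneg.mpr hi),
    abs_of_nonneg (sub_nonneg.mpr hj), abs_of_nonneg (sub_nonneg.mpr hti),
    abs_of_nonneg (sub_nonneg.mpr htj)]
  ring

theorem sq_div_sq_div_mul {a b c : ℝ} (hb : b ≠ 0) :
    b ^ 2 / (c / a * b) ^ 2 = a ^ 2 / c ^ 2 := by
  rw [div_mul_eq_mul_div, div_pow, div_div_eq_mul_div, mul_pow, mul_comm (c ^ 2),
    mul_div_mul_left _ _ (pow_ne_zero 2 hb)]

theorem dpError_transfer (hij : i ≠ j) (hpi : p i ≠ 0) (hpj : p j ≠ 0) (hti : p i - t ≠ 0)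
    (htj : p j + t ≠ 0) :
    dpError (transferProb p i j t) (transferPriv p ε i j t) = dpError p ε := by
  rw [← sub_eq_zero, dpError, dpError,
    Fintype.sum_sub_sum_eq_of_eq_off_pair hij fun k hki hkj => by
      rw [transferProb_of_ne hki hkj, transferPriv_of_ne hki hkj],
    transferProb_left hij, transferProb_right, transferPriv_left hij, transferPriv_right,
    if_pos hpi, if_pos hpj, if_pos hti, if_pos htj, sq_div_sq_div_mul hti,
    sq_div_sq_div_mul htj]
  ring

theorem sum_transferPriv_mul (hij : i ≠ j) (hpi : p i ≠ 0) (hpj : p j ≠ 0) :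
    ∑ k, transferPriv p ε i j t k * v k =
      ∑ k, ε k * v k + t * (ε j * v j / p j - ε i * v i / p i) := by
  rw [← sub_eq_iff_eq_add',
    Fintype.sum_sub_sum_eq_of_eq_off_pair hij fun k hki hkj => by
      rw [transferPriv_of_ne hki hkj],
    transferPriv_left hij, transferPriv_right]
  field_simp
  ring

theorem objG_transfer (hij : i ≠ j) (hi : 1 / (N : ℝ) ≤ p i) (hj : 1 / (N : ℝ) ≤ p j)
    (hti : 1 / (N : ℝ) ≤ p i - t) (htj : 1 / (N : ℝ) ≤ p j + t) :
    objG η Q v (transferProb p i j t) (transferPriv p ε i j t) =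
      objG η Q v p ε + t * (ε j * v j / p j - ε i * v i / p i) := by
  have hN := one_div_card_pos i
  rw [objG_eq, objG_eq, l1DistUniform_transfer hij hi hj hti htj,
    dpError_transfer hij (hN.trans_le hi).ne' (hN.trans_le hj).ne' (hN.trans_le hti).ne'
      (hN.trans_le htj).ne',
    sum_transferPriv_mul hij (hN.trans_le hi).ne' (hN.trans_le hj).ne']
  ring

theorem IsMinimizer.transfer (h : IsMinimizer η Q v p ε) (hij : i ≠ j)
    (hi : 1 / (N : ℝ) < p i) (hj : 1 / (N : ℝ) < p j)
    (hti : 1 / (N : ℝ) ≤ p i - t) (htj : 1 / (N : ℝ) ≤ p j + t) :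
    IsMinimizer η Q v (transferProb p i j t) (transferPriv p ε i j t) := by
  have hN := one_div_card_pos i
  have hfeas : ∀ {t'}, 1 / (N : ℝ) ≤ p i - t' → 1 / (N : ℝ) ≤ p j + t' →
      Feasible (transferProb p i j t') (transferPriv p ε i j t') := fun hti' htj' =>
    h.1.transfer hij (by linarith) (by linarith) (by linarith) (by linarith)
  have hslope : ∀ t', 1 / (N : ℝ) ≤ p i - t' → 1 / (N : ℝ) ≤ p j + t' →
      0 ≤ t' * (ε j * v j / p j - ε i * v i / p i) := fun t' hti htj => by
    have := h.2 _ _ (hfeas hti htj)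
    rw [objG_transfer hij hi.le hj.le hti htj] at this
    linarith
  set s := min (p i - 1 / N) (p j - 1 / N)
  have hs : 0 < s := lt_min (by linarith) (by linarith)
  have hsi : s ≤ p i - 1 / N := min_le_left _ _
  have hsj : s ≤ p j - 1 / N := min_le_right _ _
  have hzero : ε j * v j / p j - ε i * v i / p i = 0 := by
    have hpos := hslope s (by linarith) (by linarith)
    have hneg := hslope (-s) (by linarith) (by linarith)
    nlinarith
  refine ⟨hfeas hti htj, fun q e hqe => ?_⟩
  rw [objG_transfer hij hi.le hj.le hti htj, hzero, mul_zero, add_zero]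
  exact h.2 q e hqe

end Transfer

theorem at_most_one_over_selected_general
    {N : ℕ} (v : Fin N → ℝ)
    (η Q : ℝ) (hη : 0 < η) (hQ : 0 < Q)
    (p ε : Fin N → ℝ) (hmin : IsMinimizer η Q v p ε) :
    {k : Fin N | 1 / (N : ℝ) < p k}.Subsingleton := by
  intro i (hi : 1 / (N : ℝ) < p i) j (hj : 1 / (N : ℝ) < p j)
  by_contra hij
  have hN := one_div_card_pos i
  have hti : 1 / (N : ℝ) ≤ p i - (p i - 1 / N) := by rw [sub_sub_cancel]
  have htj : 1 / (N : ℝ) ≤ p j + (p i - 1 / N) := by linarith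
  have h₀ := hmin.stationary hQ (hN.trans hi)
  have h₁ := (hmin.transfer hij hi hj hti htj).stationary hQ (i := i)
    (by rwa [transferProb_left hij, sub_sub_cancel])
  rw [transferProb_left hij, transferPriv_left hij, sub_sub_cancel,
    l1DistUniform_transfer hij hi.le hj.le hti htj,
    dpError_transfer hij (hN.trans hi).ne' (hN.trans hj).ne' (hN.trans_le hti).ne'
      (hN.trans_le htj).ne',
    mul_div_cancel_right₀ _ hN.ne'] at h₁
  -- now `h₀ : X * p i = η * Q` and `h₁ : X * (1 / N) = η * Q` for the same factor `X`
  have hX := left_ne_zero_of_mul (h₀ ▸ mul_ne_zero hη.ne' hQ.ne')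
  exact hi.ne (mul_left_cancel₀ hX (h₁.trans h₀.symm))

/-- At every minimizer of Problem 3 (pairwise distinct positive
virtual costs), at most one client has selection probability strictly greater
than `1/N`. -/
theorem at_most_one_over_selected
    {N : ℕ} (hN : 2 ≤ N) (v : Fin N → ℝ)
    (hv_pos : ∀ k, 0 < v k) (hv_inj : Function.Injective v)
    (η Q : ℝ) (hη : 0 < η) (hQ : 0 < Q)
    (p ε : Fin N → ℝ) (hmin : IsMinimizer η Q v p ε) :
    {k : Fin N | 1 / (N : ℝ) < p k}.Subsingleton :=
  at_most_one_over_selected_general v η Q hη hQ p ε hmin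
end

section
/- For all real numbers x and y with x ≥ 1 and 0 < y ≤ 1, one has (x − √2·y)² + (1/x − √2/y)² ≥ 6 − 4√2, and equality holds at x = y = 1. -/
/-!
The left side is the squared distance between `(x, 1/x)` and `s • (y, 1/y)`, `s = √2`, which
is `2c²` at `x = y = 1`, where `c = s - 1`. Write `x - s y = a - c` and
`1/x - s/y = -(b + c)` with `a = (x - 1) + s (1 - y) ≥ 0`; the sum is then
`a² + b² - 2c(a - b) + 2c²`. Since `2c ≤ 1` it suffices that `a - b ≤ a²`, and indeed
`a - b = (x + 1/x - 2) - s (y + 1/y - 2) ≤ (x - 1)²/x ≤ a²`.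
-/

open Real

lemma add_inv_sub_two_eq {x : ℝ} (hx : x ≠ 0) : x + x⁻¹ - 2 = (x - 1) ^ 2 / x := by
  field_simp
  ring

lemma add_inv_sub_two_nonneg {y : ℝ} (hy : 0 < y) : 0 ≤ y + y⁻¹ - 2 := by
  rw [add_inv_sub_two_eq hy.ne']
  positivity

lemma add_inv_sub_two_le_sq {x : ℝ} (hx : 1 ≤ x) : x + x⁻¹ - 2 ≤ (x - 1) ^ 2 := by
  rw [add_inv_sub_two_eq (by positivity)]
  exact div_le_self (sq_nonneg _) hx

lemma two_mul_sq_le_sub_sq_add_add_sq {a b c : ℝ} (hc : 0 ≤ c) (hc' : 2 * c ≤ 1)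
    (hab : a - b ≤ a ^ 2) : 2 * c ^ 2 ≤ (a - c) ^ 2 + (b + c) ^ 2 := by
  have : 2 * c * (a - b) ≤ a ^ 2 + b ^ 2 := by
    rcases le_total a b with h | h
    · nlinarith [sq_nonneg a, sq_nonneg b]
    · nlinarith [sq_nonneg b]
  nlinarith

theorem two_mul_sub_one_sq_le_sq_sub_mul_add_sq_div_sub_div {s x y : ℝ} (hs : 1 ≤ s)
    (hs' : 2 * s ≤ 3) (hx : 1 ≤ x) (hy : 0 < y) (hy' : y ≤ 1) :
    2 * (s - 1) ^ 2 ≤ (x - s * y) ^ 2 + (1 / x - s / y) ^ 2 := by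
  set a := (x - 1) + s * (1 - y)
  set b := s / y - 1 / x - (s - 1)
  have ha : x - 1 ≤ a := by nlinarith
  have hab : a - b = (x + x⁻¹ - 2) - s * (y + y⁻¹ - 2) := by
    simp only [a, b, div_eq_mul_inv]
    ring
  have hab' : a - b ≤ a ^ 2 :=
    calc a - b ≤ x + x⁻¹ - 2 := by
          rw [hab]
          nlinarith [add_inv_sub_two_nonneg hy]
      _ ≤ (x - 1) ^ 2 := add_inv_sub_two_le_sq hx
      _ ≤ a ^ 2 := pow_le_pow_left₀ (by linarith) ha 2
  convert two_mul_sq_le_sub_sq_add_add_sq (c := s - 1) (by linarith) (by linarith) hab'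
    using 2 <;> ring

lemma two_mul_sqrt_two_le_three : 2 * √2 ≤ 3 := by
  nlinarith [sq_sqrt (show (0 : ℝ) ≤ 2 by norm_num), sqrt_nonneg 2]

lemma two_mul_sqrt_two_sub_one_sq : 2 * (√2 - 1) ^ 2 = 6 - 4 * √2 := by
  ring_nf
  rw [sq_sqrt (by norm_num)]
  ring

/-- For `x ≥ 1` and `0 < y ≤ 1`,
`(x − √2 y)² + (1/x − √2/y)² ≥ 6 − 4√2`, with equality at `x = y = 1`. -/
theorem two_variable_exchange_bound :
    (∀ x y : ℝ, 1 ≤ x → 0 < y → y ≤ 1 →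
      6 - 4 * Real.sqrt 2 ≤
        (x - Real.sqrt 2 * y) ^ 2 + (1 / x - Real.sqrt 2 / y) ^ 2) ∧
    ((1 - Real.sqrt 2 * 1) ^ 2 + (1 / 1 - Real.sqrt 2 / 1) ^ 2
      = 6 - 4 * Real.sqrt 2) := by
  refine ⟨fun x y hx hy hy' => ?_, ?_⟩
  · rw [← two_mul_sqrt_two_sub_one_sq]
    exact two_mul_sub_one_sq_le_sq_sub_mul_add_sq_div_sub_div one_lt_sqrt_two.le
      two_mul_sqrt_two_le_three hx hy hy'
  · rw [← two_mul_sqrt_two_sub_one_sq]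
    ring
end

section
/- For every real number x ≥ 1, 3·(x^{1/3} + x^{−1/3}) − 2√2·(x^{1/2} + x^{−1/2}) ≤ 6 − 4√2, with equality at x = 1. -/
/-!
Substituting `x = s⁶` turns the claim into a rational inequality in `s`. Multiplied by `s³`, the
gap `6 - 4√2 - (3(s² + s⁻²) - 2√2(s³ + s⁻³))` becomes `(s - 1)²` times a quartic whose
coefficients `2√2, 4√2 - 3, 6√2 - 6, 4√2 - 3, 2√2` are all positive, so it is nonnegative for every
`s > 0` and vanishes only at `s = 1`.
-/

open Real

lemma sq_add_inv_sub_cube_add_inv_le {s : ℝ} (hs : 0 < s) :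
    3 * (s ^ 2 + (s ^ 2)⁻¹) - 2 * √2 * (s ^ 3 + (s ^ 3)⁻¹) ≤ 6 - 4 * √2 := by
  have hr : √2 ^ 2 = 2 := sq_sqrt (by norm_num)
  have hr1 : 1 ≤ √2 := by nlinarith [sqrt_nonneg 2]
  have hquartic : 0 ≤ 2 * √2 * s ^ 4 + (4 * √2 - 3) * s ^ 3 + (6 * √2 - 6) * s ^ 2
      + (4 * √2 - 3) * s + 2 * √2 := by
    have h4 : 0 < (4 * √2 - 3) * s ^ 3 + (4 * √2 - 3) * s := by
      have : 0 < 4 * √2 - 3 := by linarith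
      positivity
    have h6 : 0 ≤ (6 * √2 - 6) * s ^ 2 := mul_nonneg (by linarith) (sq_nonneg s)
    have h2 : 0 < 2 * √2 * s ^ 4 + 2 * √2 := by positivity
    linarith
  have hgap : 6 - 4 * √2 - (3 * (s ^ 2 + (s ^ 2)⁻¹) - 2 * √2 * (s ^ 3 + (s ^ 3)⁻¹))
      = (s - 1) ^ 2 * (2 * √2 * s ^ 4 + (4 * √2 - 3) * s ^ 3 + (6 * √2 - 6) * s ^ 2
        + (4 * √2 - 3) * s + 2 * √2) / s ^ 3 := by
    field_simp
    ring
  have := div_nonneg (mul_nonneg (sq_nonneg (s - 1)) hquartic) (pow_pos hs 3).le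
  linarith

lemma rpow_one_div_six_pow {x : ℝ} (hx : 0 ≤ x) (n : ℕ) :
    (x ^ ((1 : ℝ) / 6)) ^ n = x ^ ((n : ℝ) / 6) := by
  rw [← rpow_natCast, ← rpow_mul hx, one_div_mul_eq_div]

lemma rpow_third_sub_rpow_half_le {x : ℝ} (hx : 0 < x) :
    3 * (x ^ ((1 : ℝ) / 3) + x ^ (-((1 : ℝ) / 3)))
        - 2 * √2 * (x ^ ((1 : ℝ) / 2) + x ^ (-((1 : ℝ) / 2)))
      ≤ 6 - 4 * √2 := by
  have hthird : x ^ ((1 : ℝ) / 3) = (x ^ ((1 : ℝ) / 6)) ^ 2 := by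
    rw [rpow_one_div_six_pow hx.le]; norm_num
  have hhalf : x ^ ((1 : ℝ) / 2) = (x ^ ((1 : ℝ) / 6)) ^ 3 := by
    rw [rpow_one_div_six_pow hx.le]; norm_num
  rw [rpow_neg hx.le, rpow_neg hx.le, hthird, hhalf]
  exact sq_add_inv_sub_cube_add_inv_le (rpow_pos_of_pos hx _)

/-- For every real `x ≥ 1`,
`3(x^{1/3} + x^{−1/3}) − 2√2(x^{1/2} + x^{−1/2}) ≤ 6 − 4√2`,
with equality at `x = 1`. -/
theorem cube_root_vs_square_root_bound :
    (∀ x : ℝ, 1 ≤ x →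
      3 * (x ^ ((1 : ℝ) / 3) + x ^ (-((1 : ℝ) / 3)))
        - 2 * Real.sqrt 2 * (x ^ ((1 : ℝ) / 2) + x ^ (-((1 : ℝ) / 2)))
      ≤ 6 - 4 * Real.sqrt 2) ∧
    (3 * ((1 : ℝ) ^ ((1 : ℝ) / 3) + (1 : ℝ) ^ (-((1 : ℝ) / 3)))
        - 2 * Real.sqrt 2 * ((1 : ℝ) ^ ((1 : ℝ) / 2) + (1 : ℝ) ^ (-((1 : ℝ) / 2)))
      = 6 - 4 * Real.sqrt 2) := by
  refine ⟨fun x hx => rpow_third_sub_rpow_half_le (by linarith), ?_⟩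
  simp only [one_rpow]
  ring
end

section
/- For all real numbers p₁, p₂, v₁, v₂ with 0 < p₂ ≤ p₁ and 0 < v₁ < v₂, the strict inequality (p₁ + p₂)²·(v₁² + v₂²) > ((p₁·v₁)^{2/3} + (p₂·v₂)^{2/3})³ holds. -/
/-!
This is the two-term Hölder inequality `∑ pᵢ^{2/3} vᵢ^{2/3} ≤ (∑ pᵢ)^{2/3} (∑ vᵢ²)^{1/3}`, strict
because `(p₁, p₂)` is not proportional to `(v₁², v₂²)`. Writing `p₁ = a³, p₂ = b³, v₁ = c³,
v₂ = d³` turns it into a polynomial inequality, and expanding both sides shows that the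
difference is the sum of two instances of AM-GM in the form `3 z x² ≤ z³ + 2 x³`, namely with
`(z, x) = (a²d², abc²)` and `(z, x) = (b²c², abd²)`. The first is strict exactly when
`a d² ≠ b c²`.
-/

theorem three_mul_mul_sq_le_pow_three_add_two_mul_pow_three {x z : ℝ} (hx : 0 ≤ x) (hz : 0 ≤ z) :
    3 * z * x ^ 2 ≤ z ^ 3 + 2 * x ^ 3 := by
  nlinarith [mul_nonneg (sq_nonneg (z - x)) (add_nonneg hz (mul_nonneg zero_le_two hx))]

theorem three_mul_mul_sq_lt_pow_three_add_two_mul_pow_three {x z : ℝ} (hx : 0 ≤ x) (hz : 0 ≤ z)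
    (hxz : z ≠ x) : 3 * z * x ^ 2 < z ^ 3 + 2 * x ^ 3 := by
  have hpos : 0 < z + 2 * x := lt_of_le_of_ne (by positivity) fun h ↦ hxz (by linarith)
  nlinarith [mul_pos (sq_pos_of_ne_zero (sub_ne_zero.2 hxz)) hpos]

theorem sq_add_sq_pow_three_lt {a b c d : ℝ} (ha : 0 < a) (hb : 0 ≤ b)
    (hne : a * d ^ 2 ≠ b * c ^ 2) :
    ((a * c) ^ 2 + (b * d) ^ 2) ^ 3 < (a ^ 3 + b ^ 3) ^ 2 * ((c ^ 3) ^ 2 + (d ^ 3) ^ 2) := by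
  have h₁ : 3 * (a ^ 2 * d ^ 2) * (a * b * c ^ 2) ^ 2
      < (a ^ 2 * d ^ 2) ^ 3 + 2 * (a * b * c ^ 2) ^ 3 :=
    three_mul_mul_sq_lt_pow_three_add_two_mul_pow_three (by positivity) (by positivity) fun h ↦
      hne (mul_left_cancel₀ ha.ne' (by linear_combination h))
  have h₂ : 3 * (b ^ 2 * c ^ 2) * (a * b * d ^ 2) ^ 2
      ≤ (b ^ 2 * c ^ 2) ^ 3 + 2 * (a * b * d ^ 2) ^ 3 :=
    three_mul_mul_sq_le_pow_three_add_two_mul_pow_three (by positivity) (by positivity)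
  linear_combination h₁ + h₂

theorem rpow_two_thirds_pow_three {a : ℝ} (ha : 0 ≤ a) : (a ^ 3) ^ ((2 : ℝ) / 3) = a ^ 2 := by
  rw [← Real.rpow_natCast a 3, ← Real.rpow_mul ha]
  norm_num

theorem exists_pow_three_eq {x : ℝ} (hx : 0 ≤ x) : ∃ a, 0 ≤ a ∧ a ^ 3 = x :=
  ⟨x ^ ((3 : ℕ)⁻¹ : ℝ), by positivity, Real.rpow_inv_natCast_pow hx three_ne_zero⟩

theorem rpow_two_thirds_add_rpow_two_thirds_pow_three_lt {p₁ p₂ v₁ v₂ : ℝ} (hp₁ : 0 < p₁)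
    (hp₂ : 0 ≤ p₂) (hv₁ : 0 ≤ v₁) (hv₂ : 0 ≤ v₂) (hne : p₁ * v₂ ^ 2 ≠ p₂ * v₁ ^ 2) :
    ((p₁ * v₁) ^ ((2 : ℝ) / 3) + (p₂ * v₂) ^ ((2 : ℝ) / 3)) ^ 3
      < (p₁ + p₂) ^ 2 * (v₁ ^ 2 + v₂ ^ 2) := by
  obtain ⟨a, ha, rfl⟩ := exists_pow_three_eq hp₁.le
  obtain ⟨b, hb, rfl⟩ := exists_pow_three_eq hp₂
  obtain ⟨c, hc, rfl⟩ := exists_pow_three_eq hv₁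
  obtain ⟨d, hd, rfl⟩ := exists_pow_three_eq hv₂
  rw [← mul_pow, ← mul_pow, rpow_two_thirds_pow_three (mul_nonneg ha hc),
    rpow_two_thirds_pow_three (mul_nonneg hb hd)]
  refine sq_add_sq_pow_three_lt (ha.lt_of_ne ?_) hb fun h ↦ hne ?_
  · rintro rfl
    simp at hp₁
  · linear_combination ((a * d ^ 2) ^ 2 + a * d ^ 2 * (b * c ^ 2) + (b * c ^ 2) ^ 2) * h

/-- For `0 < p₂ ≤ p₁` and `0 < v₁ < v₂`,
`(p₁ + p₂)² (v₁² + v₂²) > ((p₁ v₁)^{2/3} + (p₂ v₂)^{2/3})³`. -/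
theorem two_client_exchange_inequality
    (p₁ p₂ v₁ v₂ : ℝ) (hp₂ : 0 < p₂) (hp : p₂ ≤ p₁)
    (hv₁ : 0 < v₁) (hv : v₁ < v₂) :
    ((p₁ * v₁) ^ ((2 : ℝ) / 3) + (p₂ * v₂) ^ ((2 : ℝ) / 3)) ^ 3
      < (p₁ + p₂) ^ 2 * (v₁ ^ 2 + v₂ ^ 2) := by
  have hp₁ : 0 < p₁ := hp₂.trans_le hp
  have hv₂ : 0 < v₂ := hv₁.trans hv
  have hlt : p₂ * v₁ ^ 2 < p₁ * v₂ ^ 2 := calc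
    p₂ * v₁ ^ 2 ≤ p₁ * v₁ ^ 2 := by gcongr
    _ < p₁ * v₂ ^ 2 := by gcongr
  exact rpow_two_thirds_add_rpow_two_thirds_pow_three_lt hp₁ hp₂.le hv₁.le hv₂.le hlt.ne'
end
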